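/- arXiv:1305.4905 — 3 statements merged into one kernel-verified Lean document; each statement's English description precedes it below -/
import Mathlib

section
/- Let q be a prime power and let D be a 2-minimal acyclic multicast network with subtree graph H. If H has a proper coloring with q + 1 colors, then D admits a rate-2 linear coding solution over the finite field F_q. -/
namespace NCMinor

variable {V A : Type}

/-- `IsArcWalk tl hd u v p` : the list of arcs `p` forms a directed walk from `u` to `v`
in the multigraph with tail map `tl` and head map `hd`. -/
def IsArcWalk (tl hd : A → V) : V → V → List A → Prop
  | u, v, [] => u = v
  | u, v, a :: p => tl a = u ∧ IsArcWalk tl hd (hd a) v p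

/-- `lam tl hd s v` : the maximum number of pairwise arc-disjoint directed paths
from `s` to `v`. -/
noncomputable def lam (tl hd : A → V) (s v : V) : ℕ :=
  sSup {k | ∃ P : Fin k → List A,
    (∀ i, IsArcWalk tl hd s v (P i)) ∧
    ∀ i j : Fin k, i ≠ j → ∀ a, a ∈ P i → a ∉ P j}

/-- in-degree -/
noncomputable def inDeg (hd : A → V) (v : V) : ℕ := {a | hd a = v}.ncard

/-- `cutVal tl hd U` : number of arcs entering the node set `U` from outside. -/
noncomputable def cutVal (tl hd : A → V) (U : Set V) : ℕ :=
  {a | tl a ∉ U ∧ hd a ∈ U}.ncard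

/-- `eta tl hd s u v` : minimum value of a cut separating `{u, v}` from `s`. -/
noncomputable def eta (tl hd : A → V) (s u v : V) : ℕ :=
  sInf {k | ∃ U : Set V, u ∈ U ∧ v ∈ U ∧ s ∉ U ∧ cutVal tl hd U = k}

def Acyclic (tl hd : A → V) : Prop := ∀ v p, IsArcWalk tl hd v v p → p = []

/-- deleting any arc decreases the max-flow to some node. -/
def LinkMinimal (tl hd : A → V) (s : V) : Prop :=
  ∀ a : A, ∃ v : V,
    lam (fun b : {b : A // b ≠ a} => tl b.1) (fun b => hd b.1) s v < lam tl hd s v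

/-- rate 2 is feasible to every receiver, but infeasible after deleting any arc. -/
def TwoMinimal (tl hd : A → V) (s : V) (T : Set V) : Prop :=
  (∀ t ∈ T, 2 ≤ lam tl hd s t) ∧
  ∀ a : A, ∃ t ∈ T,
    lam (fun b : {b : A // b ≠ a} => tl b.1) (fun b => hd b.1) s t < 2

/-- a rate-2 linear coding solution over the field `F`. -/
def IsCodingSolution (tl hd : A → V) (s : V) (T : Set V) {F : Type} [Field F]
    (φ : A → F × F) : Prop :=
  (∀ a, φ a ≠ 0) ∧
  (∀ a, tl a ≠ s → φ a ∈ Submodule.span F (φ '' {b | hd b = tl a})) ∧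
  (∀ t ∈ T, Submodule.span F (φ '' {b | hd b = t}) = ⊤)

/-- generating relation of the subtree decomposition: consecutive arcs through an
in-degree-1 node lie in the same class. -/
def SubtreeRel (tl hd : A → V) (a b : A) : Prop :=
  hd a = tl b ∧ inDeg hd (hd a) = 1

/-- the subtrees: classes of arcs generated by `SubtreeRel`. -/
def Subtrees (tl hd : A → V) : Type := Quot (SubtreeRel tl hd)

/-- the subtree graph: two subtrees are adjacent iff some node of in-degree 2 has one
incoming arc in each. -/
def subtreeGraph (tl hd : A → V) : SimpleGraph (Subtrees tl hd) where
  Adj x y := x ≠ y ∧ ∃ a b : A,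
    Quot.mk _ a = x ∧ Quot.mk _ b = y ∧ hd a = hd b ∧ inDeg hd (hd a) = 2
  symm := by
    constructor
    rintro x y ⟨hxy, a, b, ha, hb, hab, hdeg⟩
    exact ⟨hxy.symm, b, a, hb, ha, hab.symm, hab ▸ hdeg⟩
  loopless := by constructor; rintro x ⟨hxx, -⟩; exact hxx rfl

/-- the underlying (undirected, simple) topology of the network. -/
def topology (tl hd : A → V) : SimpleGraph V where
  Adj u v := u ≠ v ∧ ∃ a, (tl a = u ∧ hd a = v) ∨ (tl a = v ∧ hd a = u)
  symm := by constructor; rintro u v ⟨huv, a, h⟩; exact ⟨huv.symm, a, h.symm⟩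
  loopless := by constructor; rintro u ⟨h, -⟩; exact h rfl

/-- graph minor via branch sets. -/
def IsMinor {W : Type} (M : SimpleGraph W) (G : SimpleGraph V) : Prop :=
  ∃ B : W → Set V,
    (∀ m, (G.induce (B m)).Connected) ∧
    (Pairwise fun m m' => Disjoint (B m) (B m')) ∧
    ∀ m m', M.Adj m m' → ∃ u ∈ B m, ∃ v ∈ B m', G.Adj u v

/-- `S` is the arc set of an `s`-rooted out-tree. -/
def IsOutTree (tl hd : A → V) (s : V) (S : Set A) : Prop :=
  (∀ a ∈ S, hd a ≠ s) ∧
  Set.InjOn hd S ∧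
  ∀ a ∈ S, ∃ p : List A, (∀ b ∈ p, b ∈ S) ∧ IsArcWalk tl hd s (tl a) p

/-- node `v` belongs to the out-tree with root `s` and arc set `S`. -/
def MemTree (tl hd : A → V) (s : V) (S : Set A) (v : V) : Prop :=
  v = s ∨ ∃ a ∈ S, hd a = v ∨ tl a = v

/-- tree decomposition of the graph `G` with host tree `H` and bags `B`. -/
structure IsTreeDecomp (G : SimpleGraph V) {X : Type} (H : SimpleGraph X)
    (B : X → Set V) : Prop where
  isTree : H.IsTree
  mem_bag : ∀ v, ∃ x, v ∈ B x
  edge_bag : ∀ u v, G.Adj u v → ∃ x, u ∈ B x ∧ v ∈ B x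
  bag_connected : ∀ v : V, (H.induce {x | v ∈ B x}).Connected

/-- size of a largest clique. -/
noncomputable def cliqueNumber {W : Type} (G : SimpleGraph W) : ℕ :=
  sSup {n | ∃ t : Finset W, G.IsNClique n t}

end NCMinor

/-! Colour the subtrees properly by the `q + 1` points of the projective line over `F` and give
every arc a representative vector of the point of its subtree. An arc whose tail has in-degree
one continues the subtree of the arc entering that tail, so it carries the same vector. The two
arcs entering a node of in-degree two lie in different subtrees (otherwise a walk through one of
them could be rerouted along the subtree through the other, making it redundant, against
2-minimality); these subtrees are adjacent in the subtree graph, so the two vectors are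
independent and span `F²`. Receivers have in-degree two, and no node has larger in-degree: by
Menger's theorem every arc enters a cut of value two around some receiver, and uncrossing the
cuts of three arcs with a common head gives a cut of value two entered by all three. -/

namespace NCMinor

open Relation

section

variable {V A : Type} {tl hd : A → V} {s t u v w : V} {a b c e r : A} {p q : List A}

section Walks

@[simp] theorem isArcWalk_nil : IsArcWalk tl hd u v [] ↔ u = v := Iff.rfl

@[simp] theorem isArcWalk_cons :
    IsArcWalk tl hd u v (a :: p) ↔ tl a = u ∧ IsArcWalk tl hd (hd a) v p := Iff.rfl

theorem isArcWalk_append :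
    IsArcWalk tl hd u v (p ++ q) ↔ ∃ w, IsArcWalk tl hd u w p ∧ IsArcWalk tl hd w v q := by
  induction p generalizing u with
  | nil => simp
  | cons a p ih => simp [ih, and_assoc, exists_and_left]

theorem IsArcWalk.concat (h : IsArcWalk tl hd u (tl a) p) : IsArcWalk tl hd u (hd a) (p ++ [a]) :=
  isArcWalk_append.2 ⟨tl a, h, rfl, rfl⟩

theorem IsArcWalk.exists_split (h : IsArcWalk tl hd u v p) (ha : a ∈ p) :
    ∃ p₁ p₂, p = p₁ ++ a :: p₂ ∧ IsArcWalk tl hd u (tl a) p₁ ∧ IsArcWalk tl hd (hd a) v p₂ := by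
  obtain ⟨p₁, p₂, rfl⟩ := List.append_of_mem ha
  obtain ⟨w, h₁, rfl, h₂⟩ := isArcWalk_append.1 h
  exact ⟨p₁, p₂, rfl, h₁, h₂⟩

theorem IsArcWalk.exists_mem_hd_eq (h : IsArcWalk tl hd u v p) (huv : u ≠ v) :
    ∃ a ∈ p, hd a = v := by
  induction p generalizing u with
  | nil => exact absurd h huv
  | cons a p ih =>
    by_cases hav : hd a = v
    · exact ⟨a, List.mem_cons_self, hav⟩
    · obtain ⟨b, hb, hbv⟩ := ih h.2 hav
      exact ⟨b, List.mem_cons_of_mem a hb, hbv⟩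

theorem IsArcWalk.exists_mem_entering {U : Set V} (h : IsArcWalk tl hd u v p) (hu : u ∉ U)
    (hv : v ∈ U) : ∃ a ∈ p, tl a ∉ U ∧ hd a ∈ U := by
  induction p generalizing u with
  | nil => exact absurd (h ▸ hv) hu
  | cons a p ih =>
    obtain ⟨rfl, hp⟩ := h
    by_cases ha : hd a ∈ U
    · exact ⟨a, List.mem_cons_self, hu, ha⟩
    · obtain ⟨b, hb, hbU⟩ := ih hp ha
      exact ⟨b, List.mem_cons_of_mem a hb, hbU⟩

theorem IsArcWalk.exists_nodup_subset (h : IsArcWalk tl hd u v p) :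
    ∃ p', IsArcWalk tl hd u v p' ∧ p'.Nodup ∧ p' ⊆ p := by
  induction p generalizing u with
  | nil => exact ⟨[], h, List.nodup_nil, List.Subset.refl _⟩
  | cons a p ih =>
    obtain ⟨rfl, hp⟩ := h
    obtain ⟨p', hp', hnd, hsub⟩ := ih hp
    by_cases ha : a ∈ p'
    · -- cut out the loop that returns to `a`
      obtain ⟨p₁, p₂, rfl, -, hp₂⟩ := hp'.exists_split ha
      refine ⟨a :: p₂, ⟨rfl, hp₂⟩, hnd.sublist (List.sublist_append_right _ _), ?_⟩
      exact List.cons_subset_cons a (fun x hx => hsub (by simp [hx]))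
    · exact ⟨a :: p', ⟨rfl, hp'⟩, List.nodup_cons.2 ⟨ha, hnd⟩, List.cons_subset_cons a hsub⟩

theorem IsArcWalk.forall_tl_mem_of_closed {U : Set V} (h : IsArcWalk tl hd u v p) (hu : u ∈ U)
    (hU : ∀ a ∈ p, tl a ∈ U → hd a ∈ U) : ∀ a ∈ p, tl a ∈ U := by
  induction p generalizing u with
  | nil => simp
  | cons a p ih =>
    obtain ⟨rfl, hp⟩ := h
    have ha := hU a List.mem_cons_self hu
    simpa [hu] using ih hp ha fun b hb => hU b (List.mem_cons_of_mem a hb)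

theorem IsArcWalk.entering_subsingleton {U : Set V} (h : IsArcWalk tl hd u v p)
    (hU : ∀ a ∈ p, tl a ∈ U → hd a ∈ U) : {a | a ∈ p ∧ tl a ∉ U ∧ hd a ∈ U}.Subsingleton := by
  induction p generalizing u with
  | nil => simp
  | cons a p ih =>
    obtain ⟨rfl, hp⟩ := h
    have hU' : ∀ b ∈ p, tl b ∈ U → hd b ∈ U := fun b hb => hU b (List.mem_cons_of_mem a hb)
    have hlater : hd a ∈ U → ∀ b ∈ p, tl b ∈ U := fun ha => hp.forall_tl_mem_of_closed ha hU'
    simp only [Set.Subsingleton, Set.mem_ofPred_eq, List.mem_cons]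
    rintro x ⟨rfl | hx, hxU, hx'⟩ y ⟨rfl | hy, hyU, hy'⟩
    · rfl
    · exact absurd (hlater hx' y hy) hyU
    · exact absurd (hlater hy' x hx) hxU
    · exact ih hp hU' ⟨hx, hxU, hx'⟩ ⟨hy, hyU, hy'⟩

section Restrict

variable {P : A → Prop}

theorem IsArcWalk.map_val {p : List (Subtype P)}
    (h : IsArcWalk (fun b : Subtype P => tl b.1) (fun b => hd b.1) u v p) :
    IsArcWalk tl hd u v (p.map Subtype.val) := by
  induction p generalizing u with
  | nil => exact h
  | cons a p ih => exact ⟨h.1, ih h.2⟩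

theorem IsArcWalk.exists_lift (h : IsArcWalk tl hd u v p) (hP : ∀ a ∈ p, P a) :
    ∃ p' : List (Subtype P), p'.map Subtype.val = p ∧
      IsArcWalk (fun b : Subtype P => tl b.1) (fun b => hd b.1) u v p' := by
  induction p generalizing u with
  | nil => exact ⟨[], rfl, h⟩
  | cons a p ih =>
    obtain ⟨p', rfl, hp'⟩ := ih h.2 fun b hb => hP b (List.mem_cons_of_mem a hb)
    exact ⟨⟨a, hP a List.mem_cons_self⟩ :: p', rfl, h.1, hp'⟩

end Restrict

end Walks

section Acyclic

theorem Acyclic.hd_ne_of_isArcWalk (hacyc : Acyclic tl hd) (h : IsArcWalk tl hd (hd a) (tl b) p) :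
    hd b ≠ hd a := fun hba =>
  List.concat_ne_nil b p (hacyc _ _ (hba ▸ h.concat))

theorem Acyclic.nodup (hacyc : Acyclic tl hd) (h : IsArcWalk tl hd u v p) : p.Nodup := by
  induction p generalizing u with
  | nil => exact List.nodup_nil
  | cons a p ih =>
    refine List.nodup_cons.2 ⟨fun ha => ?_, ih h.2⟩
    obtain ⟨p₁, -, -, hp₁, -⟩ := h.2.exists_split ha
    exact List.cons_ne_nil a p₁ (hacyc _ _ ⟨rfl, hp₁⟩)

theorem Acyclic.restrict {P : A → Prop} (hacyc : Acyclic tl hd) :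
    Acyclic (fun b : Subtype P => tl b.1) (fun b => hd b.1) := fun v _ h =>
  List.map_eq_nil_iff.1 (hacyc v _ h.map_val)

theorem Acyclic.wellFounded_next [Finite A] (hacyc : Acyclic tl hd) :
    WellFounded fun b a : A => tl b = hd a := by
  set next : A → A → Prop := fun b a => tl b = hd a
  have walk_of_transGen {a b : A} (h : TransGen next b a) :
      ∃ p, IsArcWalk tl hd (hd a) (tl b) p := by
    induction h with
    | single h => exact ⟨[], h.symm⟩
    | @tail x a _ hxa ih =>
      obtain ⟨p, hp⟩ := ih
      exact ⟨x :: p, hxa, hp⟩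
  have : Std.Irrefl (TransGen next) :=
    ⟨fun a ha => (hacyc.hd_ne_of_isArcWalk (walk_of_transGen ha).choose_spec) rfl⟩
  exact Subrelation.wf TransGen.single (Finite.wellFounded_of_trans_of_irrefl (TransGen next))

end Acyclic

section MaxFlow

/-- With `s = t` there are arbitrarily many (empty) disjoint walks, so the supremum is the
junk value `0`. -/
theorem lam_self : lam tl hd s s = 0 := by
  unfold lam
  refine Nat.sSup_of_not_bddAbove ?_
  rintro ⟨k, hk⟩
  have : k + 1 ≤ k := mem_upperBounds.1 hk (k + 1)
    ⟨fun _ => [], fun _ => rfl, fun _ _ _ _ h => absurd h List.not_mem_nil⟩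
  omega

theorem ne_of_two_le_lam (h : 2 ≤ lam tl hd s t) : s ≠ t := by
  rintro rfl
  simp [lam_self] at h

theorem exists_disjoint_walks_of_two_le_lam (h : 2 ≤ lam tl hd s t) :
    ∃ p q, IsArcWalk tl hd s t p ∧ IsArcWalk tl hd s t q ∧ p.Disjoint q := by
  obtain ⟨k, ⟨P, hP, hdisj⟩, hk⟩ := exists_lt_of_lt_csSup' (Nat.lt_of_succ_le h)
  exact ⟨P ⟨0, by omega⟩, P ⟨1, by omega⟩, hP _, hP _,
    fun a ha ha' => hdisj _ _ (by simp [Fin.ext_iff]) a ha ha'⟩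

variable [Finite A]

theorem two_le_lam_of_disjoint_walks (hst : s ≠ t) (hp : IsArcWalk tl hd s t p)
    (hq : IsArcWalk tl hd s t q) (hpq : p.Disjoint q) : 2 ≤ lam tl hd s t := by
  refine le_csSup ⟨Nat.card A, fun k ⟨P, hP, hdisj⟩ => ?_⟩ ⟨![p, q], ?_, ?_⟩
  · -- the first arcs of the walks are pairwise distinct
    have hne : ∀ i, P i ≠ [] := fun i h => hst (by simpa [h] using hP i)
    have hinj : Function.Injective fun i => (P i).head (hne i) := fun i j hij => by
      by_contra hij'
      refine hdisj i j hij' _ (List.head_mem (hne i)) ?_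
      simp only at hij
      exact hij ▸ List.head_mem (hne j)
    simpa using Nat.card_le_card_of_injective _ hinj
  · intro i; fin_cases i <;> assumption
  · intro i j hij a
    fin_cases i <;> fin_cases j <;>
      first | exact absurd rfl hij | exact fun h h' => hpq h h' | exact fun h h' => hpq h' h

theorem lam_le_cutVal {U : Set V} (ht : t ∈ U) (hs : s ∉ U) : lam tl hd s t ≤ cutVal tl hd U := by
  refine csSup_le ⟨0, ⟨Fin.elim0, Fin.rec0, Fin.rec0⟩⟩ fun k ⟨P, hP, hdisj⟩ => ?_
  choose f hfP hf using fun i => (hP i).exists_mem_entering hs ht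
  have hinj : Function.Injective fun i => (⟨f i, hf i⟩ : {a | tl a ∉ U ∧ hd a ∈ U}) :=
    fun i j hij => by
      by_contra hij'
      have hfij : f i = f j := congrArg Subtype.val hij
      exact hdisj i j hij' _ (hfP i) (hfij ▸ hfP j)
  have hcard := Nat.card_le_card_of_injective _ hinj
  rwa [Nat.card_fin, Nat.card_coe_set_eq] at hcard

theorem two_le_lam_delete (hst : s ≠ t) (hp : IsArcWalk tl hd s t p) (hq : IsArcWalk tl hd s t q)
    (hpq : p.Disjoint q) (hep : e ∉ p) (heq : e ∉ q) :
    2 ≤ lam (fun b : {b : A // b ≠ e} => tl b.1) (fun b => hd b.1) s t := by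
  obtain ⟨p', rfl, hp'⟩ := hp.exists_lift (P := (· ≠ e)) fun b hb hbe => hep (hbe ▸ hb)
  obtain ⟨q', rfl, hq'⟩ := hq.exists_lift (P := (· ≠ e)) fun b hb hbe => heq (hbe ▸ hb)
  exact two_le_lam_of_disjoint_walks hst hp' hq'
    fun b hb hb' => hpq (List.mem_map_of_mem hb) (List.mem_map_of_mem hb')

end MaxFlow

section WalkFlow

variable [DecidableEq A]

def walkFlow (p : List A) (a : A) : ℤ := p.count a

theorem walkFlow_cons : walkFlow (a :: p) = walkFlow p + Pi.single a 1 := by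
  ext b
  rcases eq_or_ne b a with rfl | hb
  · simp [walkFlow]
  · simp [walkFlow, hb, hb.symm]

theorem walkFlow_eq_zero (ha : a ∉ p) : walkFlow p a = 0 := by
  simp [walkFlow, List.count_eq_zero.2 ha]

theorem walkFlow_eq_one (hp : p.Nodup) (ha : a ∈ p) : walkFlow p a = 1 := by
  simp [walkFlow, List.count_eq_one_of_mem hp ha]

theorem walkFlow_le_one (hp : p.Nodup) : walkFlow p a ≤ 1 := by
  simpa [walkFlow] using List.nodup_iff_count_le_one.1 hp a

end WalkFlow

section Flow

variable [Fintype A] [DecidableEq V]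

/-- With `tl` in place of `hd` this is the outflow. -/
def inflow (hd : A → V) (f : A → ℤ) (w : V) : ℤ := ∑ a, if hd a = w then f a else 0

def netFlow (tl hd : A → V) (f : A → ℤ) (w : V) : ℤ := inflow hd f w - inflow tl f w

theorem inflow_add (f g : A → ℤ) : inflow hd (f + g) w = inflow hd f w + inflow hd g w := by
  simp only [inflow, ← Finset.sum_add_distrib, Pi.add_apply]
  exact Finset.sum_congr rfl fun a _ => by split_ifs <;> simp

theorem inflow_sub (f g : A → ℤ) : inflow hd (f - g) w = inflow hd f w - inflow hd g w := by
  simp only [inflow, ← Finset.sum_sub_distrib, Pi.sub_apply]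
  exact Finset.sum_congr rfl fun a _ => by split_ifs <;> simp

theorem inflow_single [DecidableEq A] :
    inflow hd (Pi.single a 1) w = if hd a = w then 1 else 0 := by
  rw [inflow, Finset.sum_eq_single a (fun b _ hb => by simp [hb]) (by simp)]
  simp

theorem inflow_sumElim (f : A ⊕ A → ℤ) :
    inflow (Sum.elim hd tl) f w = inflow hd (f ∘ Sum.inl) w + inflow tl (f ∘ Sum.inr) w :=
  Fintype.sum_sum_type _

theorem inflow_nonneg {f : A → ℤ} (hf : 0 ≤ f) : 0 ≤ inflow hd f w :=
  Finset.sum_nonneg fun a _ => by split_ifs; exacts [hf a, le_rfl]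

theorem le_inflow {f : A → ℤ} (hf : 0 ≤ f) (ha : hd a = w) : f a ≤ inflow hd f w := by
  have := Finset.single_le_sum (f := fun b => if hd b = w then f b else 0)
    (fun b _ => by split_ifs; exacts [hf b, le_rfl]) (Finset.mem_univ a)
  simpa [inflow, ha] using this

theorem exists_pos_of_inflow_pos {f : A → ℤ} (h : 0 < inflow hd f w) : ∃ a, hd a = w ∧ 0 < f a := by
  by_contra! hneg
  exact h.not_ge (Finset.sum_nonpos fun a _ => by split_ifs with ha; exacts [hneg a ha, le_rfl])

theorem netFlow_add (f g : A → ℤ) :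
    netFlow tl hd (f + g) w = netFlow tl hd f w + netFlow tl hd g w := by
  simp only [netFlow, inflow_add]; ring

theorem netFlow_sub (f g : A → ℤ) :
    netFlow tl hd (f - g) w = netFlow tl hd f w - netFlow tl hd g w := by
  simp only [netFlow, inflow_sub]; ring

theorem netFlow_walkFlow [DecidableEq A] (h : IsArcWalk tl hd u v p) (w : V) :
    netFlow tl hd (walkFlow p) w = (if v = w then 1 else 0) - if u = w then 1 else 0 := by
  induction p generalizing u with
  | nil => obtain rfl := h; simp [walkFlow, netFlow, inflow]
  | cons a p ih =>
    obtain ⟨rfl, hp⟩ := h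
    rw [walkFlow_cons, netFlow_add, ih hp, netFlow, inflow_single, inflow_single]
    ring

theorem netFlow_sumElim (f : A ⊕ A → ℤ) (w : V) :
    netFlow (Sum.elim tl hd) (Sum.elim hd tl) f w =
      netFlow tl hd (f ∘ Sum.inl - f ∘ Sum.inr) w := by
  rw [netFlow, inflow_sumElim, inflow_sumElim, netFlow, inflow_sub, inflow_sub]
  ring

theorem exists_pos_out_of_netFlow_lt {f : A → ℤ} (h : netFlow tl hd f w < inflow hd f w) :
    ∃ b, tl b = w ∧ 0 < f b :=
  exists_pos_of_inflow_pos (by unfold netFlow at h; linarith)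

theorem exists_walk_of_netFlow (hacyc : Acyclic tl hd) {f : A → ℤ} (hf : 0 ≤ f)
    (hsink : ∀ w, w ≠ t → netFlow tl hd f w ≤ 0) (hs : netFlow tl hd f s < 0) :
    ∃ p, IsArcWalk tl hd s t p ∧ ∀ a ∈ p, 0 < f a := by
  suffices key : ∀ a, 0 < f a → ∃ p, IsArcWalk tl hd (tl a) t p ∧ ∀ b ∈ p, 0 < f b by
    obtain ⟨a, rfl, ha⟩ := exists_pos_out_of_netFlow_lt (hs.trans_le (inflow_nonneg hf))
    exact key a ha
  refine fun a => hacyc.wellFounded_next.induction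
    (C := fun a => 0 < f a → ∃ p, IsArcWalk tl hd (tl a) t p ∧ ∀ b ∈ p, 0 < f b) a fun a ih ha => ?_
  by_cases hat : hd a = t
  · exact ⟨[a], ⟨rfl, hat⟩, by simpa using ha⟩
  · obtain ⟨b, hb, hfb⟩ :=
      exists_pos_out_of_netFlow_lt ((hsink _ hat).trans_lt (ha.trans_le (le_inflow hf rfl)))
    obtain ⟨p, hp, hpf⟩ := ih b hb hfb
    exact ⟨a :: p, ⟨rfl, hb ▸ hp⟩, by simpa [ha] using hpf⟩

theorem exists_disjoint_walks_of_netFlow [DecidableEq A] (hacyc : Acyclic tl hd) (hst : s ≠ t)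
    {f : A → ℤ} (hf : ∀ a, f a = 0 ∨ f a = 1)
    (hnet : ∀ w, netFlow tl hd f w = 2 * ((if t = w then 1 else 0) - if s = w then 1 else 0)) :
    ∃ p q, IsArcWalk tl hd s t p ∧ IsArcWalk tl hd s t q ∧ p.Disjoint q := by
  have hf0 : 0 ≤ f := fun a => by rcases hf a with h | h <;> simp [h]
  obtain ⟨p, hp, hpf⟩ := exists_walk_of_netFlow (s := s) (t := t) hacyc hf0
    (fun w hw => by rw [hnet]; split_ifs <;> simp_all) (by simp [hnet, hst.symm])
  set g := f - walkFlow p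
  have hg : ∀ a, g a = if a ∈ p then 0 else f a := by
    intro a
    split_ifs with ha
    · have := hpf a ha
      rcases hf a with h | h
      · omega
      · simp [g, h, walkFlow_eq_one (hacyc.nodup hp) ha]
    · simp [g, walkFlow_eq_zero ha]
  have hg0 : 0 ≤ g := fun a => by rw [hg]; split_ifs; exacts [le_rfl, hf0 a]
  have hgnet : ∀ w, netFlow tl hd g w = (if t = w then 1 else 0) - if s = w then 1 else 0 := by
    intro w; rw [netFlow_sub, hnet, netFlow_walkFlow hp]; ring
  obtain ⟨q, hq, hqg⟩ := exists_walk_of_netFlow (s := s) (t := t) hacyc hg0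
    (fun w hw => by rw [hgnet]; split_ifs <;> simp_all) (by simp [hgnet, hst.symm])
  refine ⟨p, q, hp, hq, fun a hap haq => ?_⟩
  have := hqg a haq
  rw [hg, if_pos hap] at this
  exact lt_irrefl 0 this

end Flow

section Residual

/-- Arcs of the residual graph of the walk `P`, as a subset of the doubled arc set `A ⊕ A`:
`inl a` traverses `a ∉ P` forwards, `inr a` traverses `a ∈ P` backwards. -/
def IsResidualArc (P : List A) : A ⊕ A → Prop
  | .inl a => a ∉ P
  | .inr a => a ∈ P

def ResidualReachable (tl hd : A → V) (P : List A) (s v : V) : Prop :=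
  ∃ R, IsArcWalk (Sum.elim tl hd) (Sum.elim hd tl) s v R ∧ ∀ z ∈ R, IsResidualArc P z

variable {P : List A}

theorem ResidualReachable.forward (h : ResidualReachable tl hd P s (tl a)) (ha : a ∉ P) :
    ResidualReachable tl hd P s (hd a) :=
  let ⟨R, hR, hRP⟩ := h
  ⟨R ++ [Sum.inl a], IsArcWalk.concat (hd := Sum.elim hd tl) (a := Sum.inl a) hR, fun z hz =>
    (List.mem_append.1 hz).elim (hRP z) fun hz => List.mem_singleton.1 hz ▸ ha⟩

theorem ResidualReachable.backward (h : ResidualReachable tl hd P s (hd a)) (ha : a ∈ P) :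
    ResidualReachable tl hd P s (tl a) :=
  let ⟨R, hR, hRP⟩ := h
  ⟨R ++ [Sum.inr a], IsArcWalk.concat (hd := Sum.elim hd tl) (a := Sum.inr a) hR, fun z hz =>
    (List.mem_append.1 hz).elim (hRP z) fun hz => List.mem_singleton.1 hz ▸ ha⟩

variable [Finite A]

/-- Augmenting `P` along a residual walk yields two arc-disjoint walks. -/
theorem two_le_lam_of_residualReachable (hacyc : Acyclic tl hd) (hst : s ≠ t)
    (hP : IsArcWalk tl hd s t P) (hR : ResidualReachable tl hd P s t) : 2 ≤ lam tl hd s t := by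
  classical
  cases nonempty_fintype A
  obtain ⟨R, hR, hRP⟩ := hR
  obtain ⟨R, hR, hRnd, hRsub⟩ := hR.exists_nodup_subset
  set f : A → ℤ := walkFlow P + (walkFlow R ∘ Sum.inl - walkFlow R ∘ Sum.inr)
  have hf : ∀ a, f a = 0 ∨ f a = 1 := by
    intro a
    have hl := walkFlow_le_one hRnd (a := .inl a)
    have hr := walkFlow_le_one hRnd (a := .inr a)
    have hl₀ : 0 ≤ walkFlow R (.inl a) := Int.natCast_nonneg _
    have hr₀ : 0 ≤ walkFlow R (.inr a) := Int.natCast_nonneg _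
    simp only [f, Pi.add_apply, Pi.sub_apply, Function.comp_apply]
    by_cases ha : a ∈ P
    · rw [walkFlow_eq_one (hacyc.nodup hP) ha,
        walkFlow_eq_zero fun h => hRP (.inl a) (hRsub h) ha]
      omega
    · rw [walkFlow_eq_zero ha, walkFlow_eq_zero fun h => ha (hRP (.inr a) (hRsub h))]
      omega
  have hnet : ∀ w, netFlow tl hd f w = 2 * ((if t = w then 1 else 0) - if s = w then 1 else 0) := by
    intro w
    have hRnet := netFlow_walkFlow hR w
    rw [netFlow_sumElim] at hRnet
    rw [netFlow_add, netFlow_walkFlow hP, hRnet]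
    ring
  obtain ⟨p, q, hp, hq, hpq⟩ := exists_disjoint_walks_of_netFlow hacyc hst hf hnet
  exact two_le_lam_of_disjoint_walks hst hp hq hpq

theorem cutVal_le_one_of_residual (hP : IsArcWalk tl hd s t P) :
    cutVal tl hd {v | ¬ResidualReachable tl hd P s v} ≤ 1 := by
  set U := {v | ¬ResidualReachable tl hd P s v}
  have hsub : {a | tl a ∉ U ∧ hd a ∈ U} ⊆ {a | a ∈ P ∧ tl a ∉ U ∧ hd a ∈ U} := fun a ha =>
    ⟨by_contra fun haP => ha.2 ((not_not.1 ha.1).forward haP), ha⟩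
  have hclosed : ∀ a ∈ P, tl a ∈ U → hd a ∈ U := fun a haP htl hhd =>
    htl (hhd.backward haP)
  exact Set.ncard_le_one_iff_subsingleton.2 ((hP.entering_subsingleton hclosed).anti hsub)

/-- The case `k = 2` of Menger's theorem, for a target reachable from the source. -/
theorem exists_cutVal_le_one_of_lam_lt_two (hacyc : Acyclic tl hd) (hst : s ≠ t)
    (hP : IsArcWalk tl hd s t P) (hlam : lam tl hd s t < 2) :
    ∃ U : Set V, t ∈ U ∧ s ∉ U ∧ cutVal tl hd U ≤ 1 :=
  ⟨{v | ¬ResidualReachable tl hd P s v},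
    fun ht => hlam.not_ge (two_le_lam_of_residualReachable hacyc hst hP ht),
    fun hs => hs ⟨[], rfl, by simp⟩, cutVal_le_one_of_residual hP⟩

end Residual

section Cuts

variable [Finite A]

theorem cutVal_inter_add_cutVal_union_le (X Y : Set V) :
    cutVal tl hd (X ∩ Y) + cutVal tl hd (X ∪ Y) ≤ cutVal tl hd X + cutVal tl hd Y := by
  have hunion : {a | tl a ∉ X ∩ Y ∧ hd a ∈ X ∩ Y} ∪ {a | tl a ∉ X ∪ Y ∧ hd a ∈ X ∪ Y}
      ⊆ {a | tl a ∉ X ∧ hd a ∈ X} ∪ {a | tl a ∉ Y ∧ hd a ∈ Y} := by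
    intro a ha
    simp only [Set.mem_union, Set.mem_ofPred_eq, Set.mem_inter_iff] at ha ⊢
    tauto
  have hinter : {a | tl a ∉ X ∩ Y ∧ hd a ∈ X ∩ Y} ∩ {a | tl a ∉ X ∪ Y ∧ hd a ∈ X ∪ Y}
      ⊆ {a | tl a ∉ X ∧ hd a ∈ X} ∩ {a | tl a ∉ Y ∧ hd a ∈ Y} := by
    intro a ha
    simp only [Set.mem_union, Set.mem_ofPred_eq, Set.mem_inter_iff] at ha ⊢
    tauto
  have h₁ := Set.ncard_union_add_ncard_inter {a | tl a ∉ X ∩ Y ∧ hd a ∈ X ∩ Y}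
    {a | tl a ∉ X ∪ Y ∧ hd a ∈ X ∪ Y}
  have h₂ := Set.ncard_union_add_ncard_inter {a | tl a ∉ X ∧ hd a ∈ X} {a | tl a ∉ Y ∧ hd a ∈ Y}
  have h₃ := Set.ncard_le_ncard hunion
  have h₄ := Set.ncard_le_ncard hinter
  unfold cutVal
  omega

theorem cutVal_le_cutVal_delete (U : Set V) (he : ¬(tl e ∉ U ∧ hd e ∈ U)) :
    cutVal tl hd U ≤ cutVal (fun b : {b : A // b ≠ e} => tl b.1) (fun b => hd b.1) U := by
  have hsub : {a | tl a ∉ U ∧ hd a ∈ U}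
      ⊆ Subtype.val '' {b : {b : A // b ≠ e} | tl b.1 ∉ U ∧ hd b.1 ∈ U} :=
    fun a ha => ⟨⟨a, fun hae => he (hae ▸ ha)⟩, ha, rfl⟩
  exact (Set.ncard_le_ncard hsub).trans_eq (Set.ncard_image_of_injective _ Subtype.val_injective)

theorem cutVal_le_cutVal_delete_add_one (U : Set V) :
    cutVal tl hd U ≤ cutVal (fun b : {b : A // b ≠ e} => tl b.1) (fun b => hd b.1) U + 1 := by
  have hsub : {a | tl a ∉ U ∧ hd a ∈ U}
      ⊆ insert e (Subtype.val '' {b : {b : A // b ≠ e} | tl b.1 ∉ U ∧ hd b.1 ∈ U}) := fun a ha =>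
    (eq_or_ne a e).imp id fun hae => ⟨⟨a, hae⟩, ha, rfl⟩
  refine (Set.ncard_le_ncard hsub).trans ((Set.ncard_insert_le _ _).trans_eq ?_)
  rw [Set.ncard_image_of_injective _ Subtype.val_injective]
  rfl

theorem two_le_inDeg_of_ne (hb : hd b = v) (hc : hd c = v) (hbc : b ≠ c) : 2 ≤ inDeg hd v :=
  calc 2 = ({b, c} : Set A).ncard := (Set.ncard_pair hbc).symm
    _ ≤ inDeg hd v := Set.ncard_le_ncard (by rintro x (rfl | rfl) <;> assumption)

end Cuts

section TwoMinimal

variable {T : Set V}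

theorem TwoMinimal.source_ne (hmin : TwoMinimal tl hd s T) (ht : t ∈ T) : s ≠ t :=
  ne_of_two_le_lam (hmin.1 t ht)

variable [Finite A]

theorem TwoMinimal.exists_walk_mem (hmin : TwoMinimal tl hd s T) (e : A) :
    ∃ t ∈ T, ∃ p, IsArcWalk tl hd s t p ∧ e ∈ p := by
  obtain ⟨t, ht, hlt⟩ := hmin.2 e
  obtain ⟨p, q, hp, hq, hpq⟩ := exists_disjoint_walks_of_two_le_lam (hmin.1 t ht)
  by_contra! h
  exact hlt.not_ge (two_le_lam_delete (hmin.source_ne ht) hp hq hpq (h t ht p hp) (h t ht q hq))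

theorem TwoMinimal.hd_ne_source (hacyc : Acyclic tl hd) (hmin : TwoMinimal tl hd s T) (a : A) :
    hd a ≠ s := fun has => by
  obtain ⟨t, -, p, hp, ha⟩ := hmin.exists_walk_mem a
  obtain ⟨p₁, -, -, hp₁, -⟩ := hp.exists_split ha
  exact hacyc.hd_ne_of_isArcWalk (a := a) (b := a) (has ▸ hp₁) rfl

theorem TwoMinimal.exists_hd_eq_tl (hmin : TwoMinimal tl hd s T) (ha : tl a ≠ s) :
    ∃ b, hd b = tl a := by
  obtain ⟨t, -, p, hp, hap⟩ := hmin.exists_walk_mem a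
  obtain ⟨p₁, -, -, hp₁, -⟩ := hp.exists_split hap
  obtain ⟨b, -, hb⟩ := hp₁.exists_mem_hd_eq ha.symm
  exact ⟨b, hb⟩

theorem TwoMinimal.two_le_inDeg (hmin : TwoMinimal tl hd s T) (ht : t ∈ T) : 2 ≤ inDeg hd t := by
  obtain ⟨p, q, hp, hq, hpq⟩ := exists_disjoint_walks_of_two_le_lam (hmin.1 t ht)
  obtain ⟨b, hb, hbt⟩ := hp.exists_mem_hd_eq (hmin.source_ne ht)
  obtain ⟨c, hc, hct⟩ := hq.exists_mem_hd_eq (hmin.source_ne ht)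
  exact two_le_inDeg_of_ne hbt hct fun hbc => hpq hb (hbc ▸ hc)

theorem TwoMinimal.exists_tight_cut (hacyc : Acyclic tl hd) (hmin : TwoMinimal tl hd s T) (e : A) :
    ∃ U : Set V, tl e ∉ U ∧ hd e ∈ U ∧ s ∉ U ∧ (∃ t ∈ T, t ∈ U) ∧ cutVal tl hd U = 2 := by
  obtain ⟨t, ht, hlt⟩ := hmin.2 e
  obtain ⟨p, q, hp, hq, hpq⟩ := exists_disjoint_walks_of_two_le_lam (hmin.1 t ht)
  obtain ⟨r, hr, her⟩ : ∃ r, IsArcWalk tl hd s t r ∧ e ∉ r := by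
    by_cases hep : e ∈ p
    exacts [⟨q, hq, hpq hep⟩, ⟨p, hp, hep⟩]
  obtain ⟨r', -, hr'⟩ := hr.exists_lift (P := (· ≠ e)) fun b hb hbe => her (hbe ▸ hb)
  obtain ⟨U, htU, hsU, hcut⟩ :=
    exists_cutVal_le_one_of_lam_lt_two hacyc.restrict (hmin.source_ne ht) hr' hlt
  have h₂ : 2 ≤ cutVal tl hd U := (hmin.1 t ht).trans (lam_le_cutVal htU hsU)
  have he : tl e ∉ U ∧ hd e ∈ U := by
    by_contra he
    have := cutVal_le_cutVal_delete U he
    omega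
  have := cutVal_le_cutVal_delete_add_one (tl := tl) (hd := hd) (e := e) U
  exact ⟨U, he.1, he.2, hsU, ⟨t, ht, htU⟩, by omega⟩

theorem TwoMinimal.cutVal_inter_le_two (hmin : TwoMinimal tl hd s T) {X Y : Set V}
    (hX : cutVal tl hd X ≤ 2) (hY : cutVal tl hd Y ≤ 2) (hs : s ∉ X ∪ Y)
    (hT : ∃ t ∈ T, t ∈ X ∪ Y) : cutVal tl hd (X ∩ Y) ≤ 2 := by
  obtain ⟨t, ht, htXY⟩ := hT
  have := (hmin.1 t ht).trans (lam_le_cutVal htXY hs)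
  have := cutVal_inter_add_cutVal_union_le (tl := tl) (hd := hd) X Y
  omega

/-- Uncrossing the tight cuts of three arcs with a common head would give a cut of value at
most two that all three arcs enter. -/
theorem TwoMinimal.inDeg_le_two (hacyc : Acyclic tl hd) (hmin : TwoMinimal tl hd s T) (v : V) :
    inDeg hd v ≤ 2 := by
  by_contra! h
  obtain ⟨e₁, e₂, e₃, h₁, h₂, h₃, h₁₂, h₁₃, h₂₃⟩ := (Set.two_lt_ncard_iff (Set.toFinite _)).1 h
  obtain ⟨U₁, ht₁, hh₁, hs₁, ⟨t₁, hT₁, htU₁⟩, hc₁⟩ := hmin.exists_tight_cut hacyc e₁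
  obtain ⟨U₂, ht₂, hh₂, hs₂, -, hc₂⟩ := hmin.exists_tight_cut hacyc e₂
  obtain ⟨U₃, ht₃, hh₃, hs₃, ⟨t₃, hT₃, htU₃⟩, hc₃⟩ := hmin.exists_tight_cut hacyc e₃
  have hc₁₂ : cutVal tl hd (U₁ ∩ U₂) ≤ 2 :=
    hmin.cutVal_inter_le_two hc₁.le hc₂.le (by simp [hs₁, hs₂]) ⟨t₁, hT₁, Or.inl htU₁⟩
  have hc₁₂₃ : cutVal tl hd (U₁ ∩ U₂ ∩ U₃) ≤ 2 :=
    hmin.cutVal_inter_le_two hc₁₂ hc₃.le (by simp [hs₁, hs₂, hs₃]) ⟨t₃, hT₃, Or.inr htU₃⟩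
  have hv : v ∈ U₁ ∩ U₂ ∩ U₃ := ⟨⟨h₁ ▸ hh₁, h₂ ▸ hh₂⟩, h₃ ▸ hh₃⟩
  have hcross : 2 < cutVal tl hd (U₁ ∩ U₂ ∩ U₃) := (Set.two_lt_ncard_iff (Set.toFinite _)).2
    ⟨e₁, e₂, e₃, ⟨fun h => ht₁ h.1.1, h₁ ▸ hv⟩, ⟨fun h => ht₂ h.1.2, h₂ ▸ hv⟩,
      ⟨fun h => ht₃ h.2, h₃ ▸ hv⟩, h₁₂, h₁₃, h₂₃⟩
  omega

theorem TwoMinimal.inDeg_eq_two (hacyc : Acyclic tl hd) (hmin : TwoMinimal tl hd s T)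
    (ht : t ∈ T) : inDeg hd t = 2 :=
  le_antisymm (hmin.inDeg_le_two hacyc t) (hmin.two_le_inDeg ht)

end TwoMinimal

section Subtrees

theorem SubtreeRel.left_unique (hb : SubtreeRel tl hd b a) (hc : SubtreeRel tl hd c a) : b = c := by
  obtain ⟨x, hx⟩ := Set.ncard_eq_one.1 hb.2
  have hb' : b ∈ {y | hd y = hd b} := rfl
  have hc' : c ∈ {y | hd y = hd b} := hc.1.trans hb.1.symm
  rw [hx] at hb' hc'
  exact hb'.trans hc'.symm

/-- Every arc has at most one `SubtreeRel`-predecessor, so the equivalence generated by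
`SubtreeRel` is the relation of having a common ancestor. -/
theorem SubtreeRel.exists_common_ancestor (h : Quot.mk (SubtreeRel tl hd) b = Quot.mk _ c) :
    ∃ r, ReflTransGen (SubtreeRel tl hd) r b ∧ ReflTransGen (SubtreeRel tl hd) r c := by
  have hequiv := equivalence_join_reflTransGen (r := flip (SubtreeRel tl hd))
    fun _ x y hx hy => ⟨x, .refl, SubtreeRel.left_unique hx hy ▸ .refl⟩
  obtain ⟨r, hbr, hcr⟩ := hequiv.eqvGen_iff.1
    (EqvGen.mono (fun x y hxy => ⟨x, .refl, .single hxy⟩) _ _ (Quot.eq.1 h))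
  exact ⟨r, reflTransGen_swap.1 hbr, reflTransGen_swap.1 hcr⟩

theorem SubtreeRel.exists_isArcWalk_of_reflTransGen (h : ReflTransGen (SubtreeRel tl hd) r b) :
    ∃ l, IsArcWalk tl hd (tl r) (tl b) l ∧
      ∀ x ∈ l, ReflTransGen (SubtreeRel tl hd) r x ∧ inDeg hd (hd x) = 1 := by
  induction h with
  | refl => exact ⟨[], rfl, by simp⟩
  | @tail x b hrx hxb ih =>
    obtain ⟨l, hl, hlr⟩ := ih
    refine ⟨l ++ [x], hxb.1 ▸ hl.concat, fun y hy => ?_⟩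
    rcases List.mem_append.1 hy with hy | hy
    · exact hlr y hy
    · exact List.mem_singleton.1 hy ▸ ⟨hrx, hxb.2⟩

theorem SubtreeRel.mem_of_reflTransGen (hs : ∀ x, hd x ≠ s)
    (h : ReflTransGen (SubtreeRel tl hd) r b) {W : List A} (hW : IsArcWalk tl hd s v W)
    (hb : b ∈ W) : r ∈ W := by
  induction h with
  | refl => exact hb
  | @tail x b _ hxb ih =>
    refine ih ?_
    obtain ⟨W₁, W₂, rfl, hW₁, -⟩ := hW.exists_split hb
    obtain ⟨y, hy, hyb⟩ := hW₁.exists_mem_hd_eq fun hsb => hs x (hxb.1.trans hsb.symm)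
    have hyx : y = x := SubtreeRel.left_unique ⟨hyb, hyb ▸ hxb.1 ▸ hxb.2⟩ hxb
    exact List.mem_append_left _ (hyx ▸ hy)

theorem exists_reroute (hacyc : Acyclic tl hd) (hs : ∀ x, hd x ≠ s) (hbc : b ≠ c)
    (hh : hd b = hd c) (hc : inDeg hd (hd c) ≠ 1) (hrb : ReflTransGen (SubtreeRel tl hd) r b)
    (hrc : ReflTransGen (SubtreeRel tl hd) r c) (hp : IsArcWalk tl hd s t p)
    (hq : IsArcWalk tl hd s t q) (hpq : p.Disjoint q) (hcp : c ∈ p) :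
    ∃ p', IsArcWalk tl hd s t p' ∧ p'.Disjoint q ∧ c ∉ p' := by
  have hrp : r ∈ p := SubtreeRel.mem_of_reflTransGen hs hrc hp hcp
  obtain ⟨l, hl, hlr⟩ := SubtreeRel.exists_isArcWalk_of_reflTransGen hrb
  have hlq : ∀ x ∈ l, x ∉ q := fun x hx hxq =>
    hpq hrp (SubtreeRel.mem_of_reflTransGen hs (hlr x hx).1 hq hxq)
  have hbq : b ∉ q := fun hbq => hpq hrp (SubtreeRel.mem_of_reflTransGen hs hrb hq hbq)
  have hrc' : r ≠ c := by
    rintro rfl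
    rcases hrb.cases_head with h | ⟨x, hx, -⟩
    exacts [hbc h.symm, hc hx.2]
  have hnd := hacyc.nodup hp
  obtain ⟨p₁, p₂, rfl, hp₁, hp₂⟩ := hp.exists_split hcp
  have hcp₁₂ : c ∉ p₁ ++ p₂ := (List.nodup_cons.1 (List.nodup_middle.1 hnd)).1
  have hrp₁ : r ∈ p₁ := by
    simpa [hrc'] using SubtreeRel.mem_of_reflTransGen hs hrc hp₁.concat (List.mem_concat_self)
  obtain ⟨p₀, _, rfl, hp₀, -⟩ := hp₁.exists_split hrp₁
  -- from `r`, follow the subtree to `b` instead of going on to `c`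
  refine ⟨p₀ ++ (l ++ b :: p₂),
    isArcWalk_append.2 ⟨_, hp₀, isArcWalk_append.2 ⟨_, hl, rfl, hh ▸ hp₂⟩⟩, ?_, ?_⟩
  · intro x hx hxq
    simp only [List.mem_append, List.mem_cons] at hx
    rcases hx with hx | hx | rfl | hx
    · exact hpq (by simp [hx]) hxq
    · exact hlq x hx hxq
    · exact hbq hxq
    · exact hpq (by simp [hx]) hxq
  · intro hc'
    simp only [List.mem_append, List.mem_cons] at hc'
    rcases hc' with hc' | hc' | hc' | hc'
    · exact hcp₁₂ (by simp [hc'])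
    · exact hc (hlr c hc').2
    · exact hbc hc'.symm
    · exact hcp₁₂ (by simp [hc'])

theorem TwoMinimal.mk_ne_mk_of_hd_eq [Finite A] {T : Set V} (hacyc : Acyclic tl hd)
    (hmin : TwoMinimal tl hd s T) (hbc : b ≠ c) (hh : hd b = hd c) :
    Quot.mk (SubtreeRel tl hd) b ≠ Quot.mk _ c := by
  intro hbc'
  obtain ⟨r, hrb, hrc⟩ := SubtreeRel.exists_common_ancestor hbc'
  have hs := hmin.hd_ne_source hacyc
  have hc : inDeg hd (hd c) ≠ 1 := by have := two_le_inDeg_of_ne hh rfl hbc; omega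
  obtain ⟨t, ht, hlt⟩ := hmin.2 c
  obtain ⟨p, q, hp, hq, hpq⟩ := exists_disjoint_walks_of_two_le_lam (hmin.1 t ht)
  have key : ∃ p' q', IsArcWalk tl hd s t p' ∧ IsArcWalk tl hd s t q' ∧ p'.Disjoint q' ∧
      c ∉ p' ∧ c ∉ q' := by
    by_cases hcp : c ∈ p
    · obtain ⟨p', hp', hp'q, hcp'⟩ := exists_reroute hacyc hs hbc hh hc hrb hrc hp hq hpq hcp
      exact ⟨p', q, hp', hq, hp'q, hcp', hpq hcp⟩
    by_cases hcq : c ∈ q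
    · obtain ⟨q', hq', hq'p, hcq'⟩ :=
        exists_reroute hacyc hs hbc hh hc hrb hrc hq hp hpq.symm hcq
      exact ⟨q', p, hq', hp, hq'p, hcq', hcp⟩
    exact ⟨p, q, hp, hq, hpq, hcp, hcq⟩
  obtain ⟨p', q', hp', hq', hpq', hcp', hcq'⟩ := key
  exact hlt.not_ge (two_le_lam_delete (hmin.source_ne ht) hp' hq' hpq' hcp' hcq')

end Subtrees

section Coding

open Projectivization

open scoped LinearAlgebra.Projectivization

theorem span_rep_pair_eq_top {K W : Type*} [DivisionRing K] [AddCommGroup W] [Module K W]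
    (hW : Module.finrank K W = 2) {x y : ℙ K W} (hxy : x ≠ y) :
    Submodule.span K {x.rep, y.rep} = ⊤ := by
  have hli : LinearIndependent K ![x.rep, y.rep] := by
    convert independent_iff.1 ((independent_pair_iff_ne x y).2 hxy) using 1
    ext i; fin_cases i <;> rfl
  have := hli.span_eq_top_of_card_eq_finrank (by simp [hW])
  rwa [Matrix.range_cons, Matrix.range_cons, Matrix.range_empty, Set.union_empty,
    Set.singleton_union] at this

variable [Finite A] {T : Set V} {F ι : Type} [Field F]

theorem span_eq_top_of_inDeg_eq_two (hacyc : Acyclic tl hd) (hmin : TwoMinimal tl hd s T)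
    (C : (subtreeGraph tl hd).Coloring ι) (σ : ι ↪ ℙ F (F × F)) (hv : inDeg hd v = 2) :
    Submodule.span F ((fun a => (σ (C (Quot.mk _ a))).rep) '' {b | hd b = v}) = ⊤ := by
  obtain ⟨b, c, hbc, hbcv⟩ := Set.ncard_eq_two.1 hv
  have hb : hd b = v := (hbcv ▸ Set.mem_insert b {c} : b ∈ {x | hd x = v})
  have hc : hd c = v := (hbcv ▸ Set.mem_insert_of_mem b rfl : c ∈ {x | hd x = v})
  have hadj : (subtreeGraph tl hd).Adj (Quot.mk _ b) (Quot.mk _ c) :=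
    ⟨hmin.mk_ne_mk_of_hd_eq hacyc hbc (hb.trans hc.symm), b, c, rfl, rfl, hb.trans hc.symm,
      hb ▸ hv⟩
  rw [hbcv, Set.image_pair]
  exact span_rep_pair_eq_top (by simp) (σ.injective.ne (C.valid hadj))

theorem isCodingSolution_of_coloring (hacyc : Acyclic tl hd) (hmin : TwoMinimal tl hd s T)
    (C : (subtreeGraph tl hd).Coloring ι) (σ : ι ↪ ℙ F (F × F)) :
    IsCodingSolution tl hd s T fun a => (σ (C (Quot.mk _ a))).rep := by
  refine ⟨fun a => rep_nonzero _, fun a ha => ?_,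
    fun t ht => span_eq_top_of_inDeg_eq_two hacyc hmin C σ (hmin.inDeg_eq_two hacyc ht)⟩
  obtain ⟨b, hb⟩ := hmin.exists_hd_eq_tl ha
  have hpos : 0 < inDeg hd (tl a) := (Set.ncard_pos (Set.toFinite _)).2 ⟨b, hb⟩
  have hle := hmin.inDeg_le_two hacyc (tl a)
  rcases (by omega : inDeg hd (tl a) = 1 ∨ inDeg hd (tl a) = 2) with h₁ | h₂
  · have hba : Quot.mk (SubtreeRel tl hd) b = Quot.mk _ a := Quot.sound ⟨hb, hb ▸ h₁⟩
    exact Submodule.subset_span ⟨b, hb, congrArg (fun x => (σ (C x)).rep) hba⟩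
  · rw [span_eq_top_of_inDeg_eq_two hacyc hmin C σ h₂]
    exact Submodule.mem_top

end Coding

end

theorem codingSolution_of_subtreeGraph_colorable_general
    {V A : Type} [Fintype A] (tl hd : A → V) (s : V) (T : Set V)
    (hacyc : Acyclic tl hd) (hmin : TwoMinimal tl hd s T)
    (q : ℕ) (F : Type) [Field F] [Fintype F] (hF : Fintype.card F = q)
    (hcol : (subtreeGraph tl hd).Colorable (q + 1)) :
    ∃ φ : A → F × F, IsCodingSolution tl hd s T φ := by
  obtain ⟨C⟩ := hcol
  have hcard : Nat.card (Projectivization F (F × F)) = q + 1 := by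
    rw [Projectivization.card_of_finrank_two F (F × F) (by simp), Nat.card_eq_fintype_card, hF]
  exact ⟨_, isCodingSolution_of_coloring hacyc hmin C
    (Finite.equivFinOfCardEq hcard).symm.toEmbedding⟩

/-- Lemma 2: if the subtree graph of a 2-minimal acyclic multicast
network is properly `(q+1)`-colorable, `q` the size of the field `F`, then the network
admits a rate-2 linear coding solution over `F`. -/
theorem codingSolution_of_subtreeGraph_colorable
    {V A : Type} [Fintype V] [Fintype A] (tl hd : A → V) (s : V) (T : Set V)
    (hsT : s ∉ T) (hacyc : Acyclic tl hd) (hmin : TwoMinimal tl hd s T)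
    (q : ℕ) (F : Type) [Field F] [Fintype F] (hF : Fintype.card F = q)
    (hcol : (subtreeGraph tl hd).Colorable (q + 1)) :
    ∃ φ : A → F × F, IsCodingSolution tl hd s T φ :=
  codingSolution_of_subtreeGraph_colorable_general tl hd s T hacyc hmin q F hF hcol
end NCMinor
end

section
/- For every finite simple graph H with no isolated vertices, there exists a 2-minimal acyclic multicast network whose subtree graph is isomorphic to H. -/
/-!
Take a source, one node for every vertex `w` of `H`, fed by an arc from the source, and one
receiver for every edge `vw`, fed by an arc from `v` and an arc from `w`. The subtree of `w` is
its source arc together with the arcs leaving `w`, and two subtrees meet exactly at the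
receivers of the edges of `H`, so the subtree graph is `H`. Each receiver `vw` is reached by the
two arc-disjoint paths through `v` and through `w`. Deleting the arc from `v` into `vw` leaves
only the path through `w`; deleting the source arc of `v` leaves only the path through `w` to
the receiver of any edge `vw`. Finally the network is relabelled onto `Fin n` and `Fin m`.
-/

namespace NCMinor

section Walks

variable {V A B : Type} {tl hd : A → V}

theorem isArcWalk_map_iff (f : B → A) {u v : V} {p : List B} :
    IsArcWalk (fun b => tl (f b)) (fun b => hd (f b)) u v p ↔
      IsArcWalk tl hd u v (p.map f) := by
  induction p generalizing u with
  | nil => rfl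
  | cons b p ih => exact and_congr Iff.rfl ih

theorem isArcWalk_comp_iff {V' : Type} {f : V → V'} (hf : f.Injective) {u v : V}
    {p : List A} :
    IsArcWalk (fun a => f (tl a)) (fun a => f (hd a)) (f u) (f v) p ↔
      IsArcWalk tl hd u v p := by
  induction p generalizing u with
  | nil => exact hf.eq_iff
  | cons a p ih => exact and_congr hf.eq_iff ih

theorem IsArcWalk.rank_le {r : V → ℕ} (hr : ∀ a, r (tl a) < r (hd a)) {u v : V}
    {p : List A} (hp : IsArcWalk tl hd u v p) : r u + p.length ≤ r v := by
  induction p generalizing u with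
  | nil => simp [show u = v from hp]
  | cons a p ih =>
    obtain ⟨rfl, hp⟩ := hp
    have := ih hp
    have := hr a
    simp only [List.length_cons]
    omega

theorem acyclic_of_rank (r : V → ℕ) (hr : ∀ a, r (tl a) < r (hd a)) : Acyclic tl hd :=
  fun _ _ hp => List.length_eq_zero_iff.1 (by have := hp.rank_le hr; omega)

end Walks

section DisjointPaths

variable {V A : Type} {tl hd : A → V} {s v : V}

def HasDisjointPaths (tl hd : A → V) (s v : V) (k : ℕ) : Prop :=
  ∃ P : Fin k → List A, (∀ i, IsArcWalk tl hd s v (P i)) ∧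
    ∀ i j : Fin k, i ≠ j → ∀ a, a ∈ P i → a ∉ P j

theorem hasDisjointPaths_zero : HasDisjointPaths tl hd s v 0 :=
  ⟨Fin.elim0, fun i => i.elim0, fun i => i.elim0⟩

theorem bddAbove_hasDisjointPaths [Finite A] (hsv : s ≠ v) :
    BddAbove {k | HasDisjointPaths tl hd s v k} := by
  refine ⟨Nat.card A, fun k ⟨P, hP, hdisj⟩ => ?_⟩
  have hne : ∀ i, P i ≠ [] := fun i hnil => hsv (by simpa [hnil, IsArcWalk] using hP i)
  -- the first arcs of arc-disjoint nonempty paths are distinct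
  have hinj : Function.Injective fun i => (P i).head (hne i) := by
    intro i j hij
    by_contra hij'
    refine hdisj i j hij' _ (List.head_mem (hne i)) ?_
    simp only at hij
    rw [hij]
    exact List.head_mem _
  simpa using Nat.card_le_card_of_injective _ hinj

theorem two_le_lam [Finite A] (hsv : s ≠ v) {p q : List A} (hp : IsArcWalk tl hd s v p)
    (hq : IsArcWalk tl hd s v q) (hpq : p.Disjoint q) : 2 ≤ lam tl hd s v := by
  refine le_csSup (bddAbove_hasDisjointPaths hsv) ⟨![p, q], ?_, ?_⟩
  · intro i; fin_cases i <;> assumption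
  · intro i j hij a hi hj
    fin_cases i <;> fin_cases j
    all_goals first
      | exact hij rfl
      | exact hpq hi hj
      | exact hpq hj hi

theorem lam_le_one_of_forall_mem (c : A) (h : ∀ p, IsArcWalk tl hd s v p → c ∈ p) :
    lam tl hd s v ≤ 1 := by
  refine csSup_le ⟨0, hasDisjointPaths_zero⟩ fun k ⟨P, hP, hdisj⟩ => ?_
  by_contra! hk
  exact hdisj ⟨0, by omega⟩ ⟨1, by omega⟩ (by simp) c (h _ (hP _)) (h _ (hP _))

theorem lam_deleteArc_le_one {a c : A} (hca : c ≠ a)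
    (h : ∀ p, IsArcWalk tl hd s v p → a ∉ p → c ∈ p) :
    lam (fun b : {b : A // b ≠ a} => tl b.1) (fun b => hd b.1) s v ≤ 1 := by
  refine lam_le_one_of_forall_mem ⟨c, hca⟩ fun p hp => ?_
  have hc := h _ ((isArcWalk_map_iff Subtype.val).1 hp) fun ha =>
    (List.mem_map.1 ha).elim fun b hb => b.2 hb.2
  exact (List.mem_map_of_injective Subtype.val_injective (a := ⟨c, hca⟩)).1 hc

end DisjointPaths

structure NetworkIso {V A V' A' : Type} (tl hd : A → V) (tl' hd' : A' → V') where
  nodes : V ≃ V'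
  arcs : A ≃ A'
  tl_arcs : ∀ a, tl' (arcs a) = nodes (tl a)
  hd_arcs : ∀ a, hd' (arcs a) = nodes (hd a)

namespace NetworkIso

variable {V A V' A' : Type} {tl hd : A → V} {tl' hd' : A' → V'}

def relabel (tl hd : A → V) (f : V ≃ V') (g : A ≃ A') :
    NetworkIso tl hd (fun a' => f (tl (g.symm a'))) (fun a' => f (hd (g.symm a'))) where
  nodes := f
  arcs := g
  tl_arcs a := by simp
  hd_arcs a := by simp

variable (e : NetworkIso tl hd tl' hd')

def symm : NetworkIso tl' hd' tl hd where
  nodes := e.nodes.symm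
  arcs := e.arcs.symm
  tl_arcs a' := by obtain ⟨a, rfl⟩ := e.arcs.surjective a'; simp [e.tl_arcs]
  hd_arcs a' := by obtain ⟨a, rfl⟩ := e.arcs.surjective a'; simp [e.hd_arcs]

def deleteArc (a : A) :
    NetworkIso (fun b : {b : A // b ≠ a} => tl b.1) (fun b => hd b.1)
      (fun b : {b : A' // b ≠ e.arcs a} => tl' b.1) (fun b => hd' b.1) where
  nodes := e.nodes
  arcs := e.arcs.subtypeEquiv fun _ => e.arcs.injective.ne_iff.symm
  tl_arcs b := e.tl_arcs b.1
  hd_arcs b := e.hd_arcs b.1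

theorem isArcWalk_iff {u v : V} {p : List A} :
    IsArcWalk tl' hd' (e.nodes u) (e.nodes v) (p.map e.arcs) ↔ IsArcWalk tl hd u v p := by
  rw [← isArcWalk_map_iff, ← isArcWalk_comp_iff e.nodes.injective]
  simp only [e.tl_arcs, e.hd_arcs]

theorem hasDisjointPaths {s v : V} {k : ℕ} (h : HasDisjointPaths tl hd s v k) :
    HasDisjointPaths tl' hd' (e.nodes s) (e.nodes v) k := by
  obtain ⟨P, hP, hdisj⟩ := h
  refine ⟨fun i => (P i).map e.arcs, fun i => e.isArcWalk_iff.2 (hP i), ?_⟩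
  intro i j hij a' hi hj
  obtain ⟨a, rfl⟩ := e.arcs.surjective a'
  rw [List.mem_map_of_injective e.arcs.injective] at hi hj
  exact hdisj i j hij a hi hj

theorem lam_eq (s v : V) : lam tl' hd' (e.nodes s) (e.nodes v) = lam tl hd s v := by
  refine congrArg sSup (Set.ext fun k => ⟨fun h => ?_, e.hasDisjointPaths⟩)
  have := e.symm.hasDisjointPaths h
  simp only [symm, Equiv.symm_apply_apply] at this
  exact this

theorem inDeg_eq (v : V) : inDeg hd' (e.nodes v) = inDeg hd v := by
  rw [inDeg, inDeg, ← Set.ncard_image_of_injective _ e.arcs.injective]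
  congr 1
  ext a'
  obtain ⟨a, rfl⟩ := e.arcs.surjective a'
  simp [e.hd_arcs]

theorem acyclic (e : NetworkIso tl hd tl' hd') (h : Acyclic tl hd) : Acyclic tl' hd' :=
  fun _ _ hp => List.map_eq_nil_iff.1 (h _ _ (e.symm.isArcWalk_iff.2 hp))

theorem twoMinimal {s : V} {T : Set V} (h : TwoMinimal tl hd s T) :
    TwoMinimal tl' hd' (e.nodes s) (e.nodes '' T) := by
  refine ⟨?_, fun a' => ?_⟩
  · rintro _ ⟨t, ht, rfl⟩
    exact (e.lam_eq s t).symm ▸ h.1 t ht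
  · obtain ⟨a, rfl⟩ := e.arcs.surjective a'
    obtain ⟨t, ht, hlt⟩ := h.2 a
    exact ⟨e.nodes t, Set.mem_image_of_mem _ ht, ((e.deleteArc a).lam_eq s t).symm ▸ hlt⟩

theorem subtreeRel_iff (a b : A) :
    SubtreeRel tl hd a b ↔ SubtreeRel tl' hd' (e.arcs a) (e.arcs b) := by
  simp only [SubtreeRel, e.tl_arcs, e.hd_arcs, e.inDeg_eq, e.nodes.injective.eq_iff]

def subtreesEquiv : Subtrees tl hd ≃ Subtrees tl' hd' :=
  Quot.congr e.arcs e.subtreeRel_iff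

theorem symm_subtreesEquiv : e.symm.subtreesEquiv = e.subtreesEquiv.symm := by
  ext x
  induction x using Quot.ind
  rfl

theorem subtreeGraph_adj {x y : Subtrees tl hd} (h : (subtreeGraph tl hd).Adj x y) :
    (subtreeGraph tl' hd').Adj (e.subtreesEquiv x) (e.subtreesEquiv y) := by
  obtain ⟨hxy, a, b, rfl, rfl, hab, hdeg⟩ := h
  refine ⟨e.subtreesEquiv.injective.ne hxy, e.arcs a, e.arcs b, rfl, rfl, ?_, ?_⟩
  · rw [e.hd_arcs, e.hd_arcs, hab]
  · rw [e.hd_arcs, e.inDeg_eq, hdeg]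

def subtreeGraphIso : subtreeGraph tl hd ≃g subtreeGraph tl' hd' where
  toEquiv := e.subtreesEquiv
  map_rel_iff' :=
    ⟨fun h => by simpa [symm_subtreesEquiv] using e.symm.subtreeGraph_adj h, e.subtreeGraph_adj⟩

end NetworkIso

namespace Realization

variable {W : Type} (H : SimpleGraph W)

/-- `none` is the source, `inl w` the node of the vertex `w` and `inr e` the receiver of the
edge `e`; the arc `inl w` runs from the source to `w`, and the arc `inr d` of a dart
`d = (v, w)` runs from `v` to the receiver of `vw`. -/
abbrev Node : Type := Option (W ⊕ H.edgeSet)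

abbrev Arc : Type := W ⊕ H.Dart

def tl : Arc H → Node H
  | .inl _ => none
  | .inr d => some (.inl d.fst)

def hd : Arc H → Node H
  | .inl w => some (.inl w)
  | .inr d => some (.inr ⟨d.edge, d.edge_mem⟩)

def receivers : Set (Node H) := Set.range fun d : H.Dart => hd H (.inr d)

variable {H}

theorem hd_inr_eq_hd_inr_iff {d d' : H.Dart} :
    hd H (.inr d) = hd H (.inr d') ↔ d = d' ∨ d = d'.symm := by
  simp only [hd, Option.some.injEq, Sum.inr.injEq, Subtype.mk.injEq]
  exact SimpleGraph.dart_edge_eq_iff d d'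

theorem inDeg_hd_inl (w : W) : inDeg (hd H) (hd H (.inl w)) = 1 := by
  rw [inDeg, ← Set.ncard_singleton (Sum.inl w : Arc H)]
  congr 1
  ext (_ | _) <;> simp [hd]

theorem inDeg_hd_inr (d : H.Dart) : inDeg (hd H) (hd H (.inr d)) = 2 := by
  have : {a | hd H a = hd H (.inr d)} = {.inr d, .inr d.symm} := by
    ext (_ | d')
    · simp [hd]
    · simp [hd_inr_eq_hd_inr_iff]
  rw [inDeg, this, Set.ncard_pair (by simpa using d.symm_ne.symm)]

theorem source_not_mem_receivers : none ∉ receivers H := by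
  rintro ⟨d, h⟩
  cases h

theorem acyclic : Acyclic (tl H) (hd H) :=
  acyclic_of_rank (Option.elim · 0 (Sum.elim 1 2)) (by rintro (_ | _) <;> simp [tl, hd])

theorem eq_of_isArcWalk {d : H.Dart} {p : List (Arc H)}
    (hp : IsArcWalk (tl H) (hd H) none (hd H (.inr d)) p) :
    ∃ d', (d' = d ∨ d' = d.symm) ∧ p = [.inl d'.fst, .inr d'] := by
  rcases p with _ | ⟨_ | w, _ | ⟨_ | d', _ | ⟨_ | _, p⟩⟩⟩ <;>
    simp_all [IsArcWalk, tl, hd, SimpleGraph.dart_edge_eq_iff]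
  rcases hp with ⟨rfl, rfl | rfl⟩ <;> simp

instance [Finite W] : Finite H.Dart := Finite.of_injective _ SimpleGraph.Dart.toProd_injective

theorem two_le_lam_receiver [Finite W] (d : H.Dart) :
    2 ≤ lam (tl H) (hd H) none (hd H (.inr d)) :=
  two_le_lam (by simp [hd]) (p := [.inl d.fst, .inr d]) (q := [.inl d.snd, .inr d.symm])
    ⟨rfl, rfl, rfl⟩ ⟨rfl, rfl, hd_inr_eq_hd_inr_iff.2 (.inr rfl)⟩
    (by simp [d.symm_ne])

theorem exists_lam_deleteArc_lt_two (hH : ∀ w, ∃ w', H.Adj w w') (a : Arc H) :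
    ∃ t ∈ receivers H,
      lam (fun b : {b // b ≠ a} => tl H b.1) (fun b => hd H b.1) none t < 2 := by
  -- every walk to a receiver is `[inl d.fst, inr d]` for one of its two darts `d`,
  -- so a walk avoiding `a` must use the dart `c` chosen below
  rcases a with w | d
  · obtain ⟨w', hw⟩ := hH w
    let d : H.Dart := ⟨(w', w), hw.symm⟩
    refine ⟨_, ⟨d, rfl⟩, Nat.lt_succ_of_le (lam_deleteArc_le_one (c := .inr d) (by simp)
      fun p hp hwp => ?_)⟩
    obtain ⟨d', rfl | rfl, rfl⟩ := eq_of_isArcWalk hp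
    · simp
    · simp [d] at hwp
  · refine ⟨_, ⟨d, rfl⟩, Nat.lt_succ_of_le (lam_deleteArc_le_one (c := .inr d.symm)
      (by simp [d.symm_ne]) fun p hp hdp => ?_)⟩
    obtain ⟨d', rfl | rfl, rfl⟩ := eq_of_isArcWalk hp
    · simp at hdp
    · simp

theorem twoMinimal [Finite W] (hH : ∀ w, ∃ w', H.Adj w w') :
    TwoMinimal (tl H) (hd H) none (receivers H) :=
  ⟨by rintro _ ⟨d, rfl⟩; exact two_le_lam_receiver d, exists_lam_deleteArc_lt_two hH⟩

def owner : Arc H → W := Sum.elim id fun d => d.fst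

theorem owner_eq_of_subtreeRel {a b : Arc H} (h : SubtreeRel (tl H) (hd H) a b) :
    owner a = owner b := by
  obtain ⟨hab, hdeg⟩ := h
  rcases a with w | d
  · rcases b with _ | d' <;> simp_all [tl, hd, owner]
  · exact absurd hdeg (by rw [inDeg_hd_inr]; decide)

theorem mk_eq_mk_inl_owner (a : Arc H) :
    Quot.mk (SubtreeRel (tl H) (hd H)) a = Quot.mk _ (.inl (owner a)) := by
  rcases a with w | d
  · rfl
  · exact (Quot.sound ⟨rfl, inDeg_hd_inl d.fst⟩).symm

def vertexSubtree : W ≃ Subtrees (tl H) (hd H) where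
  toFun w := Quot.mk _ (.inl w)
  invFun := Quot.lift owner fun _ _ => owner_eq_of_subtreeRel
  left_inv _ := rfl
  right_inv := Quot.ind fun a => (mk_eq_mk_inl_owner a).symm

theorem subtreeGraph_adj_iff {v w : W} :
    (subtreeGraph (tl H) (hd H)).Adj (vertexSubtree v) (vertexSubtree w) ↔ H.Adj v w := by
  constructor
  · rintro ⟨hvw, a, b, ha, hb, hab, hdeg⟩
    have hav : owner a = v := congrArg vertexSubtree.symm ha
    have hbw : owner b = w := congrArg vertexSubtree.symm hb
    rcases a with _ | d
    · exact absurd hdeg (by rw [inDeg_hd_inl]; decide)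
    rcases b with _ | d'
    · exact absurd hdeg (by rw [hab, inDeg_hd_inl]; decide)
    obtain rfl | rfl := hd_inr_eq_hd_inr_iff.1 hab
    · exact absurd (by rw [← hav, ← hbw]) hvw
    · rw [← hav, ← hbw]
      exact d'.adj.symm
  · intro h
    let d : H.Dart := ⟨(v, w), h⟩
    exact ⟨fun hvw => h.ne (vertexSubtree.injective hvw), .inr d, .inr d.symm,
      mk_eq_mk_inl_owner _, mk_eq_mk_inl_owner _, hd_inr_eq_hd_inr_iff.2 (.inr rfl),
      inDeg_hd_inr d⟩

def subtreeGraphIso : H ≃g subtreeGraph (tl H) (hd H) :=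
  ⟨vertexSubtree, subtreeGraph_adj_iff⟩

end Realization

/-- Theorem 1: every finite simple graph without isolated vertices is
(up to isomorphism) the subtree graph of some 2-minimal acyclic multicast network. -/
theorem exists_network_with_subtreeGraph
    {W : Type} [Fintype W] (H : SimpleGraph W)
    (hno_isolated : ∀ w : W, ∃ w' : W, H.Adj w w') :
    ∃ (n m : ℕ) (tl hd : Fin m → Fin n) (s : Fin n) (T : Set (Fin n)),
      s ∉ T ∧ Acyclic tl hd ∧ TwoMinimal tl hd s T ∧
      Nonempty (subtreeGraph tl hd ≃g H) := by
  let e := NetworkIso.relabel (Realization.tl H) (Realization.hd H)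
    (Finite.equivFin _) (Finite.equivFin _)
  refine ⟨_, _, _, _, e.nodes none, e.nodes '' Realization.receivers H, ?_,
    e.acyclic Realization.acyclic, e.twoMinimal (Realization.twoMinimal hno_isolated),
    ⟨(Realization.subtreeGraphIso.trans e.subtreeGraphIso).symm⟩⟩
  rw [e.nodes.injective.mem_set_image]
  exact Realization.source_not_mem_receivers

end NCMinor
end

section
/- Let D be a 2-minimal acyclic multicast network with subtree graph H, and let M be a finite simple graph with minimum degree at least 3. If M is a minor of H, then M is a minor of the underlying topology of D. -/
/-!
A subtree containing no node of in-degree one is a single arc, and since subtrees are adjacent in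
the subtree graph `H` only through nodes of in-degree two, it has at most one neighbour in `H`.
Every vertex of `M` has at least two neighbours, so such a vertex of `H` can neither form a whole
branch set nor be an interior vertex of a path inside one: these subtrees can be removed from the
branch sets. Each remaining subtree is then replaced by its nodes of in-degree one, which span a
connected subgraph of the topology, and each node `v` of in-degree two is added to the branch set
of one of the subtrees entering it; an edge of `H` realised by arcs `a`, `b` with common head `v`
becomes the path `tl a - v - tl b`.
-/

namespace SimpleGraph

variable {α : Type*} {G : SimpleGraph α} {S Q : Set α} {u v w : α}

def ReachableIn (G : SimpleGraph α) (S : Set α) (u v : α) : Prop :=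
  ∃ (hu : u ∈ S) (hv : v ∈ S), (G.induce S).Reachable ⟨u, hu⟩ ⟨v, hv⟩

namespace ReachableIn

lemma refl (hu : u ∈ S) : G.ReachableIn S u u := ⟨hu, hu, .rfl⟩

lemma of_adj (hu : u ∈ S) (hv : v ∈ S) (h : G.Adj u v) : G.ReachableIn S u v :=
  ⟨hu, hv, Adj.reachable (induce_adj.mpr h)⟩

lemma symm (h : G.ReachableIn S u v) : G.ReachableIn S v u :=
  let ⟨hu, hv, r⟩ := h
  ⟨hv, hu, r.symm⟩

lemma trans (h₁ : G.ReachableIn S u v) (h₂ : G.ReachableIn S v w) : G.ReachableIn S u w :=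
  let ⟨hu, _, r₁⟩ := h₁
  let ⟨_, hw, r₂⟩ := h₂
  ⟨hu, hw, r₁.trans r₂⟩

lemma exists_adj_of_ne (h : G.ReachableIn S u v) (huv : u ≠ v) : ∃ z ∈ S, G.Adj u z := by
  obtain ⟨_, _, ⟨p⟩⟩ := h
  cases p with
  | nil => exact absurd rfl huv
  | cons h _ => exact ⟨_, Subtype.prop _, h⟩

lemma induction_on {P : α → α → Prop} (hrefl : ∀ x ∈ S, P x x)
    (hadj : ∀ x ∈ S, ∀ y ∈ S, G.Adj x y → P x y)
    (htrans : ∀ x, ∀ y ∈ S, ∀ z, P x y → P y z → P x z) (h : G.ReachableIn S u v) : P u v := by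
  obtain ⟨_, _, ⟨p⟩⟩ := h
  suffices ∀ (x y : S), (G.induce S).Walk x y → P x y from this _ _ p
  intro x y p
  induction p with
  | nil => exact hrefl _ (Subtype.prop _)
  | cons h _ ih =>
    exact htrans _ _ (Subtype.prop _) _ (hadj _ (Subtype.prop _) _ (Subtype.prop _) h) ih

/-- Vertices outside `Q` have at most one neighbour, so they are not interior vertices of paths. -/
lemma inter_of_isPath (hQ : ∀ z ∉ Q, (G.neighborSet z).Subsingleton) {x y : S}
    (p : (G.induce S).Walk x y) (hp : p.IsPath) (hx : x.1 ∈ Q) (hy : y.1 ∈ Q) :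
    G.ReachableIn (S ∩ Q) x y := by
  induction p with
  | nil => exact .refl ⟨Subtype.prop _, hx⟩
  | @cons x z y h q ih =>
    rw [Walk.cons_isPath_iff] at hp
    have hz : z.1 ∈ Q := by
      by_contra hz
      cases q with
      | nil => exact hz hy
      | cons h' q' =>
        obtain rfl : _ = x := Subtype.ext (hQ _ hz h' h.symm)
        exact hp.2 (by simp)
    exact (of_adj (Set.mem_inter x.2 hx) (Set.mem_inter z.2 hz) h).trans (ih hp.1 hz hy)

lemma inter (hQ : ∀ z ∉ Q, (G.neighborSet z).Subsingleton)
    (h : G.ReachableIn S u v) (hu : u ∈ Q) (hv : v ∈ Q) : G.ReachableIn (S ∩ Q) u v := by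
  classical
  obtain ⟨_, _, ⟨p⟩⟩ := h
  exact inter_of_isPath hQ p.bypass p.bypass_isPath hu hv

end ReachableIn

lemma connected_induce_iff_reachableIn :
    (G.induce S).Connected ↔ S.Nonempty ∧ ∀ u ∈ S, ∀ v ∈ S, G.ReachableIn S u v := by
  rw [connected_iff, Set.nonempty_coe_sort, and_comm]
  exact and_congr_right fun _ =>
    ⟨fun h u hu v hv => ⟨hu, hv, h _ _⟩, fun h u v => (h u u.2 v v.2).2.2⟩

end SimpleGraph

namespace NCMinor

open SimpleGraph Function

section MinorModel

variable {α W : Type} {M : SimpleGraph W} {G : SimpleGraph α} {B : W → Set α} {Q : Set α}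

structure IsMinorModel (M : SimpleGraph W) (G : SimpleGraph α) (B : W → Set α) : Prop where
  connected : ∀ m, (G.induce (B m)).Connected
  disjoint : Pairwise (Disjoint on B)
  exists_adj : ∀ m m', M.Adj m m' → ∃ u ∈ B m, ∃ v ∈ B m', G.Adj u v

lemma isMinor_iff_exists_isMinorModel : IsMinor M G ↔ ∃ B, IsMinorModel M G B :=
  ⟨fun ⟨B, h₁, h₂, h₃⟩ => ⟨B, h₁, h₂, h₃⟩, fun ⟨B, h₁, h₂, h₃⟩ => ⟨B, h₁, h₂, h₃⟩⟩

lemma IsMinorModel.mem_of_adj (hB : IsMinorModel M G B)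
    (hQ : ∀ z ∉ Q, (G.neighborSet z).Subsingleton) {m m' : W}
    (hm : (M.neighborSet m).Nontrivial) (hmm : m ≠ m') {x y : α} (hx : x ∈ B m) (hy : y ∈ B m') (hxy : G.Adj x y) :
    x ∈ Q := by
  by_contra hxQ
  have hnbr : ∀ z, G.Adj x z → z = y := fun _ hz => hQ x hxQ hz hxy
  by_cases hsub : B m ⊆ {x}
  · have hy_mem : ∀ m'', M.Adj m m'' → y ∈ B m'' := by
      intro m'' hadj
      obtain ⟨u, hu, v, hv, huv⟩ := hB.exists_adj m m'' hadj
      obtain rfl : u = x := hsub hu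
      exact hnbr v huv ▸ hv
    obtain ⟨m₁, hm₁, m₂, hm₂, hne⟩ := hm
    exact Set.disjoint_left.mp (hB.disjoint hne) (hy_mem m₁ hm₁) (hy_mem m₂ hm₂)
  · obtain ⟨x', hx', hne⟩ := Set.not_subset.mp hsub
    obtain ⟨-, hreach⟩ := connected_induce_iff_reachableIn.mp (hB.connected m)
    obtain ⟨z, hz, hxz⟩ := (hreach x hx x' hx').exists_adj_of_ne (Ne.symm hne)
    exact Set.disjoint_left.mp (hB.disjoint hmm) (hnbr z hxz ▸ hz) hy

lemma IsMinorModel.inter (hB : IsMinorModel M G B) (hM : ∀ m, (M.neighborSet m).Nontrivial)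
    (hQ : ∀ z ∉ Q, (G.neighborSet z).Subsingleton) :
    IsMinorModel M G fun m => B m ∩ Q where
  connected m := by
    obtain ⟨m', hm'⟩ := (hM m).nonempty
    obtain ⟨x, hx, y, hy, hxy⟩ := hB.exists_adj m m' hm'
    obtain ⟨-, hreach⟩ := connected_induce_iff_reachableIn.mp (hB.connected m)
    exact connected_induce_iff_reachableIn.mpr ⟨⟨x, hx, hB.mem_of_adj hQ (hM m) hm'.ne hx hy hxy⟩,
      fun u hu v hv => (hreach u hu.1 v hv.1).inter hQ hu.2 hv.2⟩
  disjoint _ _ hmm := (hB.disjoint hmm).mono Set.inter_subset_left Set.inter_subset_left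
  exists_adj m m' hadj := by
    obtain ⟨x, hx, y, hy, hxy⟩ := hB.exists_adj m m' hadj
    exact ⟨x, ⟨hx, hB.mem_of_adj hQ (hM m) hadj.ne hx hy hxy⟩,
      y, ⟨hy, hB.mem_of_adj hQ (hM m') hadj.ne.symm hy hx hxy.symm⟩, hxy⟩

end MinorModel

lemma eq_of_eqvGen_of_isolated {α : Type*} {r : α → α → Prop} {a b : α}
    (ha : ∀ c, ¬ r a c ∧ ¬ r c a) (h : Relation.EqvGen r a b) : b = a := by
  have key : ∀ {e f}, Relation.EqvGen r e f → (e = a ↔ f = a) := by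
    intro e f h
    induction h with
    | rel e f hef =>
      constructor <;> rintro rfl
      exacts [((ha f).1 hef).elim, ((ha e).2 hef).elim]
    | refl => rfl
    | symm _ _ _ ih => exact ih.symm
    | trans _ _ _ _ _ ih₁ ih₂ => exact ih₁.trans ih₂
  exact (key h).mp rfl

variable {V A W : Type} {tl hd : A → V}

lemma exists_eq_of_inDeg_eq_one {v : V} (h : inDeg hd v = 1) : ∃ a, ∀ b, hd b = v ↔ b = a := by
  obtain ⟨a, ha⟩ := Set.ncard_eq_one.mp h
  exact ⟨a, fun b => Set.ext_iff.mp ha b⟩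

lemma eq_or_eq_of_inDeg_eq_two {v : V} (h : inDeg hd v = 2) {a b c : A} (hab : a ≠ b)
    (ha : hd a = v) (hb : hd b = v) (hc : hd c = v) : c = a ∨ c = b := by
  obtain ⟨p, q, -, hpq⟩ := Set.ncard_eq_two.mp h
  have hmem : ∀ x, hd x = v ↔ x = p ∨ x = q := fun x => Set.ext_iff.mp hpq x
  rcases (hmem a).mp ha with rfl | rfl <;> rcases (hmem b).mp hb with rfl | rfl <;>
    rcases (hmem c).mp hc with rfl | rfl <;> simp_all

lemma topology_adj_of_ne (a : A) (h : tl a ≠ hd a) : (topology tl hd).Adj (tl a) (hd a) :=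
  ⟨h, a, .inl ⟨rfl, rfl⟩⟩

lemma reachableIn_topology_tl_hd {S : Set V} (a : A) (ht : tl a ∈ S) (hh : hd a ∈ S) :
    (topology tl hd).ReachableIn S (tl a) (hd a) := by
  by_cases h : tl a = hd a
  · rw [← h]
    exact .refl ht
  · exact .of_adj ht hh (topology_adj_of_ne a h)

/-- The nodes of the subtree `x` other than its root. -/
def innerNodes (tl hd : A → V) (x : Subtrees tl hd) : Set V :=
  {w | inDeg hd w = 1 ∧ ∃ a, hd a = w ∧ Quot.mk _ a = x}

lemma hd_mem_innerNodes {a : A} (h : inDeg hd (hd a) = 1) :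
    hd a ∈ innerNodes tl hd (Quot.mk _ a) :=
  ⟨h, a, rfl, rfl⟩

lemma tl_mem_innerNodes {a : A} (h : inDeg hd (tl a) = 1) :
    tl a ∈ innerNodes tl hd (Quot.mk _ a) := by
  obtain ⟨b, hb⟩ := exists_eq_of_inDeg_eq_one h
  have hba : hd b = tl a := (hb b).mpr rfl
  exact ⟨h, b, hba, Quot.sound ⟨hba, hba ▸ h⟩⟩

lemma eq_of_mem_innerNodes {x y : Subtrees tl hd} {w : V} (hx : w ∈ innerNodes tl hd x)
    (hy : w ∈ innerNodes tl hd y) : x = y := by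
  obtain ⟨h, a, ha, rfl⟩ := hx
  obtain ⟨-, b, hb, rfl⟩ := hy
  obtain ⟨c, hc⟩ := exists_eq_of_inDeg_eq_one h
  rw [(hc a).mp ha, (hc b).mp hb]

lemma eq_of_mk_eq_mk_of_inDeg_ne_one {a b : A} (hhd : inDeg hd (hd a) ≠ 1)
    (htl : inDeg hd (tl a) ≠ 1) (h : Quot.mk (SubtreeRel tl hd) b = Quot.mk _ a) : b = a :=
  eq_of_eqvGen_of_isolated (r := SubtreeRel tl hd)
    (fun _ => ⟨fun hac => hhd hac.2, fun hca => htl (hca.1 ▸ hca.2)⟩)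
    (Quot.eqvGen_exact h).symm

lemma eq_of_not_nonempty_innerNodes {a b : A}
    (hx : ¬ (innerNodes tl hd (Quot.mk _ a)).Nonempty)
    (h : Quot.mk (SubtreeRel tl hd) b = Quot.mk _ a) : b = a :=
  eq_of_mk_eq_mk_of_inDeg_ne_one (fun h₁ => hx ⟨_, hd_mem_innerNodes h₁⟩)
    (fun h₁ => hx ⟨_, tl_mem_innerNodes h₁⟩) h

lemma tl_mem_innerNodes_of_nonempty {a : A} (hx : (innerNodes tl hd (Quot.mk _ a)).Nonempty)
    (hhd : inDeg hd (hd a) ≠ 1) : tl a ∈ innerNodes tl hd (Quot.mk _ a) := by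
  by_contra htl
  obtain ⟨-, hw, c, rfl, hc⟩ := hx
  exact hhd (eq_of_mk_eq_mk_of_inDeg_ne_one hhd (fun h => htl (tl_mem_innerNodes h)) hc ▸ hw)

lemma subsingleton_neighborSet_subtreeGraph {x : Subtrees tl hd}
    (hx : ¬ (innerNodes tl hd x).Nonempty) : ((subtreeGraph tl hd).neighborSet x).Subsingleton := by
  intro y hy z hz
  obtain ⟨hxy, a, b, rfl, rfl, hab, h₂⟩ := hy
  obtain ⟨hxz, a', c, ha', rfl, hac, -⟩ := hz
  obtain rfl := eq_of_not_nonempty_innerNodes hx ha'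
  rcases eq_or_eq_of_inDeg_eq_two h₂ (ne_of_apply_ne _ hxy) rfl hab.symm hac.symm with rfl | rfl
  · exact absurd rfl hxz
  · rfl

noncomputable def innerEnd (tl hd : A → V) (a : A) : V :=
  if inDeg hd (hd a) = 1 then hd a else tl a

lemma innerEnd_mem {x : Subtrees tl hd} (hx : (innerNodes tl hd x).Nonempty) {a : A}
    (ha : Quot.mk _ a = x) : innerEnd tl hd a ∈ innerNodes tl hd x := by
  subst ha
  unfold innerEnd
  split_ifs with h
  · exact hd_mem_innerNodes h
  · exact tl_mem_innerNodes_of_nonempty hx h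

lemma reachableIn_innerEnd {S : Set V} {x : Subtrees tl hd} (hS : innerNodes tl hd x ⊆ S)
    (hx : (innerNodes tl hd x).Nonempty) {a b : A} (h : Relation.EqvGen (SubtreeRel tl hd) a b)
    (ha : Quot.mk _ a = x) :
    (topology tl hd).ReachableIn S (innerEnd tl hd a) (innerEnd tl hd b) := by
  induction h with
  | rel e f hef =>
    have hf : Quot.mk _ f = x := (Quot.sound hef).symm.trans ha
    have heS := hS (innerEnd_mem hx ha)
    have hfS := hS (innerEnd_mem hx hf)
    have he : innerEnd tl hd e = tl f := by rw [innerEnd, if_pos hef.2, hef.1]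
    rw [he] at heS ⊢
    unfold innerEnd at hfS ⊢
    split_ifs at hfS ⊢
    · exact reachableIn_topology_tl_hd f heS hfS
    · exact .refl hfS
  | refl => exact .refl (hS (innerEnd_mem hx ha))
  | symm e f hef ih => exact (ih ((Quot.eqvGen_sound hef).trans ha)).symm
  | trans e f g hef _ ih₁ ih₂ =>
    exact (ih₁ ha).trans (ih₂ ((Quot.eqvGen_sound hef).symm.trans ha))

lemma reachableIn_innerNodes {S : Set V} {x : Subtrees tl hd} (hS : innerNodes tl hd x ⊆ S)
    {u w : V} (hu : u ∈ innerNodes tl hd x) (hw : w ∈ innerNodes tl hd x) :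
    (topology tl hd).ReachableIn S u w := by
  obtain ⟨hu₁, b, rfl, rfl⟩ := hu
  obtain ⟨hw₁, c, rfl, hc⟩ := hw
  have h := reachableIn_innerEnd hS ⟨_, hd_mem_innerNodes hu₁⟩ (Quot.eqvGen_exact hc.symm) rfl
  simpa [innerEnd, hu₁, hw₁] using h

section Expansion

variable {B : W → Set (Subtrees tl hd)} {m : W}

def owners (B : W → Set (Subtrees tl hd)) (v : V) : Set W :=
  {m | ∃ a, hd a = v ∧ Quot.mk _ a ∈ B m}

noncomputable def expandBranchSet (B : W → Set (Subtrees tl hd)) (m : W) : Set V :=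
  (⋃ x ∈ B m, innerNodes tl hd x) ∪
    {v | inDeg hd v = 2 ∧ ∃ h : (owners B v).Nonempty, h.some = m}

lemma innerNodes_subset_expandBranchSet {x : Subtrees tl hd} (hx : x ∈ B m) :
    innerNodes tl hd x ⊆ expandBranchSet B m :=
  fun _ hw => Or.inl (Set.mem_biUnion hx hw)

lemma hd_mem_expandBranchSet_or (hdisj : Pairwise (Disjoint on B)) {a b : A} (hab : a ≠ b)
    (h : hd a = hd b) (h₂ : inDeg hd (hd a) = 2) {m m' : W} (ha : Quot.mk _ a ∈ B m)
    (hb : Quot.mk _ b ∈ B m') : hd a ∈ expandBranchSet B m ∨ hd a ∈ expandBranchSet B m' := by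
  have hne : (owners B (hd a)).Nonempty := ⟨m, a, rfl, ha⟩
  obtain ⟨c, hc, hcB⟩ := hne.some_mem
  rcases eq_or_eq_of_inDeg_eq_two h₂ hab rfl h.symm hc with rfl | rfl
  · exact .inl (.inr ⟨h₂, hne, hdisj.eq (Set.not_disjoint_iff.mpr ⟨_, hcB, ha⟩)⟩)
  · exact .inr (.inr ⟨h₂, hne, hdisj.eq (Set.not_disjoint_iff.mpr ⟨_, hcB, hb⟩)⟩)

lemma disjoint_expandBranchSet (hdisj : Pairwise (Disjoint on B)) {m m' : W} (hmm : m ≠ m') :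
    Disjoint (expandBranchSet B m) (expandBranchSet B m') := by
  rw [Set.disjoint_left]
  rintro v (hv | ⟨hv₂, hne, rfl⟩) (hv' | ⟨hv₂', hne', hm⟩)
  · obtain ⟨x, hx, hvx⟩ := Set.mem_iUnion₂.mp hv
    obtain ⟨y, hy, hvy⟩ := Set.mem_iUnion₂.mp hv'
    exact Set.disjoint_left.mp (hdisj hmm) hx (eq_of_mem_innerNodes hvx hvy ▸ hy)
  · obtain ⟨x, -, hv₁, -⟩ := Set.mem_iUnion₂.mp hv
    omega
  · obtain ⟨x, -, hv₁, -⟩ := Set.mem_iUnion₂.mp hv'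
    omega
  · exact hmm hm

lemma exists_innerNodes_reachableIn (hgood : ∀ x ∈ B m, (innerNodes tl hd x).Nonempty) {v : V}
    (hv : v ∈ expandBranchSet B m) : ∃ x ∈ B m, ∃ u ∈ innerNodes tl hd x,
      (topology tl hd).ReachableIn (expandBranchSet B m) u v := by
  rcases hv with hv | ⟨hv₂, hne, rfl⟩
  · obtain ⟨x, hx, hvx⟩ := Set.mem_iUnion₂.mp hv
    exact ⟨x, hx, v, hvx, .refl (Or.inl hv)⟩
  · obtain ⟨a, rfl, ha⟩ := hne.some_mem
    have htl := tl_mem_innerNodes_of_nonempty (hgood _ ha) (by omega)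
    exact ⟨_, ha, tl a, htl, reachableIn_topology_tl_hd a
      (innerNodes_subset_expandBranchSet ha htl) (Or.inr ⟨hv₂, hne, rfl⟩)⟩

lemma reachableIn_of_reachableIn_subtreeGraph (hdisj : Pairwise (Disjoint on B))
    (hgood : ∀ x ∈ B m, (innerNodes tl hd x).Nonempty)
    {x y : Subtrees tl hd} (hxy : (subtreeGraph tl hd).ReachableIn (B m) x y) :
    ∀ u ∈ innerNodes tl hd x, ∀ w ∈ innerNodes tl hd y,
      (topology tl hd).ReachableIn (expandBranchSet B m) u w := by
  refine hxy.induction_on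
    (P := fun x y => ∀ u ∈ innerNodes tl hd x, ∀ w ∈ innerNodes tl hd y,
      (topology tl hd).ReachableIn (expandBranchSet B m) u w) ?_ ?_ ?_
  · exact fun x hx u hu w hw =>
      reachableIn_innerNodes (innerNodes_subset_expandBranchSet hx) hu hw
  · rintro _ hx _ hy ⟨hne, a, b, rfl, rfl, hab, h₂⟩ u hu w hw
    have h₂' : inDeg hd (hd b) = 2 := hab ▸ h₂
    have hta := tl_mem_innerNodes_of_nonempty (hgood _ hx) (by omega)
    have htb := tl_mem_innerNodes_of_nonempty (hgood _ hy) (by omega)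
    have hv : hd a ∈ expandBranchSet B m :=
      (hd_mem_expandBranchSet_or hdisj (ne_of_apply_ne _ hne) hab h₂ hx hy).elim id id
    have hta' := innerNodes_subset_expandBranchSet hx hta
    have htb' := innerNodes_subset_expandBranchSet hy htb
    have hb := reachableIn_topology_tl_hd b htb' (hab ▸ hv)
    rw [← hab] at hb
    exact (reachableIn_innerNodes (innerNodes_subset_expandBranchSet hx) hu hta).trans
      ((reachableIn_topology_tl_hd a hta' hv).trans
        (hb.symm.trans (reachableIn_innerNodes (innerNodes_subset_expandBranchSet hy) htb hw)))
  · intro x y hy z hxy hyz u hu w hw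
    obtain ⟨v, hv⟩ := hgood y hy
    exact (hxy u hu v hv).trans (hyz v hv w hw)

lemma connected_expandBranchSet (hB : IsMinorModel M (subtreeGraph tl hd) B)
    (hgood : ∀ x ∈ B m, (innerNodes tl hd x).Nonempty) :
    ((topology tl hd).induce (expandBranchSet B m)).Connected := by
  obtain ⟨⟨x₀, hx₀⟩, hreach⟩ := connected_induce_iff_reachableIn.mp (hB.connected m)
  obtain ⟨w₀, hw₀⟩ := hgood x₀ hx₀
  refine connected_induce_iff_reachableIn.mpr
    ⟨⟨w₀, innerNodes_subset_expandBranchSet hx₀ hw₀⟩, fun v hv v' hv' => ?_⟩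
  obtain ⟨x, hx, u, hu, huv⟩ := exists_innerNodes_reachableIn hgood hv
  obtain ⟨x', hx', u', hu', huv'⟩ := exists_innerNodes_reachableIn hgood hv'
  have huu' := reachableIn_of_reachableIn_subtreeGraph hB.disjoint hgood (hreach x hx x' hx')
    u hu u' hu'
  exact huv.symm.trans (huu'.trans huv')

lemma exists_adj_expandBranchSet (hB : IsMinorModel M (subtreeGraph tl hd) B)
    (hgood : ∀ m, ∀ x ∈ B m, (innerNodes tl hd x).Nonempty) {m m' : W} (hmm : M.Adj m m') :
    ∃ u ∈ expandBranchSet B m, ∃ v ∈ expandBranchSet B m', (topology tl hd).Adj u v := by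
  obtain ⟨x, hx, y, hy, hne, a, b, rfl, rfl, hab, h₂⟩ := hB.exists_adj m m' hmm
  have h₂' : inDeg hd (hd b) = 2 := hab ▸ h₂
  have hta := tl_mem_innerNodes_of_nonempty (hgood _ _ hx) (by omega)
  have htb := tl_mem_innerNodes_of_nonempty (hgood _ _ hy) (by omega)
  have hta₁ : inDeg hd (tl a) = 1 := hta.1
  have htb₁ : inDeg hd (tl b) = 1 := htb.1
  rcases hd_mem_expandBranchSet_or hB.disjoint (ne_of_apply_ne _ hne) hab h₂ hx hy with hv | hv
  · refine ⟨hd a, hv, tl b, innerNodes_subset_expandBranchSet hy htb, ?_⟩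
    rw [hab]
    exact (topology_adj_of_ne b (ne_of_apply_ne (inDeg hd) (by omega))).symm
  · exact ⟨tl a, innerNodes_subset_expandBranchSet hx hta, hd a, hv,
      topology_adj_of_ne a (ne_of_apply_ne (inDeg hd) (by omega))⟩

theorem IsMinorModel.expandBranchSet (hB : IsMinorModel M (subtreeGraph tl hd) B)
    (hgood : ∀ m, ∀ x ∈ B m, (innerNodes tl hd x).Nonempty) :
    IsMinorModel M (topology tl hd) (expandBranchSet B) where
  connected _ := connected_expandBranchSet hB (hgood _)
  disjoint _ _ := disjoint_expandBranchSet hB.disjoint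
  exists_adj _ _ := exists_adj_expandBranchSet hB hgood

end Expansion

theorem minor_topology_of_minor_subtreeGraph_general
    {V A : Type} (tl hd : A → V)
    {W : Type} (M : SimpleGraph W)
    (hdeg : ∀ w : W, 3 ≤ (M.neighborSet w).ncard)
    (hminor : IsMinor M (subtreeGraph tl hd)) :
    IsMinor M (topology tl hd) := by
  obtain ⟨B, hB⟩ := isMinor_iff_exists_isMinorModel.mp hminor
  have hM : ∀ w, (M.neighborSet w).Nontrivial := fun w =>
    (Set.one_lt_ncard_iff_nontrivial_and_finite.mp (by have := hdeg w; omega)).1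
  have hpruned := hB.inter (Q := {x | (innerNodes tl hd x).Nonempty}) hM
    fun _ => subsingleton_neighborSet_subtreeGraph
  exact isMinor_iff_exists_isMinorModel.mpr ⟨_, hpruned.expandBranchSet fun _ _ hx => hx.2⟩

/-- Theorem 3: for a 2-minimal acyclic multicast network, any minor
`M` of minimum degree at least 3 of the subtree graph is also a minor of the underlying
topology of the network. -/
theorem minor_topology_of_minor_subtreeGraph
    {V A : Type} [Fintype V] [Fintype A] (tl hd : A → V) (s : V) (T : Set V)
    (hsT : s ∉ T) (hacyc : Acyclic tl hd) (hmin : TwoMinimal tl hd s T)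
    {W : Type} [Fintype W] (M : SimpleGraph W)
    (hdeg : ∀ w : W, 3 ≤ (M.neighborSet w).ncard)
    (hminor : IsMinor M (subtreeGraph tl hd)) :
    IsMinor M (topology tl hd) :=
  minor_topology_of_minor_subtreeGraph_general tl hd M hdeg hminor

end NCMinor
end
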